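/- arXiv:1609.03755 — 15 statements merged into one kernel-verified Lean document; each statement's English description precedes it below -/
import Mathlib

section
/- Let Γ = Cay(G,S) be a Cayley graph of a finite group G and H a subgroup of G. Then H is a perfect code in Γ (every vertex of Γ is at distance at most one from exactly one vertex of H) if and only if S ∪ {e} is a left transversal of H in G. -/
/-- In the Cayley graph Cay(G,S) (vertices: G, with x ~ y iff y * x⁻¹ ∈ S), a subgroup H
is a perfect code (every vertex is at distance at most one from exactly one vertex of H)
iff S ∪ {1} is a left transversal of H in G. -/
theorem subgroup_perfect_code_iff_left_transversal {G : Type*} [Group G] [Fintype G]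
    (S : Set G) (hS1 : (1 : G) ∉ S) (hS2 : S⁻¹ = S) (H : Subgroup G) :
    (∀ x : G, ∃! c : G, c ∈ (H : Set G) ∧ (c = x ∨ x * c⁻¹ ∈ S)) ↔
      Subgroup.IsComplement (S ∪ {1}) (H : Set G) := by
  have key : ∀ x c : G, (c = x ∨ x * c⁻¹ ∈ S) ↔ x * c⁻¹ ∈ S ∪ {1} := by
    intro x c
    constructor
    · rintro (rfl | hs)
      · right; simp
      · left; exact hs
    · rintro (hs | h1)
      · right; exact hs
      · left; exact (mul_inv_eq_one.mp h1).symm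
  rw [Subgroup.isComplement_iff_existsUnique]
  constructor
  · intro h g
    obtain ⟨c, ⟨hcH, hc⟩, huniq⟩ := h g
    refine ⟨(⟨g * c⁻¹, (key g c).mp hc⟩, ⟨c, hcH⟩), by simp, ?_⟩
    rintro ⟨⟨s, hs⟩, ⟨d, hd⟩⟩ heq
    simp only at heq
    have hdc : d = c := huniq d ⟨hd, (key g d).mpr (by rw [← heq]; simpa using hs)⟩
    subst hdc
    have hsval : s = g * d⁻¹ := by rw [← heq]; group
    simp [Prod.ext_iff, Subtype.ext_iff, hsval]
  · intro h x
    obtain ⟨⟨⟨s, hs⟩, ⟨c, hc⟩⟩, heq, huniq⟩ := h x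
    simp only at heq
    refine ⟨c, ⟨hc, (key x c).mpr (by rw [← heq]; simpa using hs)⟩, ?_⟩
    rintro d ⟨hdH, hd⟩
    have hd' := (key x d).mp hd
    have := huniq (⟨x * d⁻¹, hd'⟩, ⟨d, hdH⟩) (by simp)
    have := congrArg (fun p => (p.2 : G)) this
    simpa using this
end

section
/- Let Γ = Cay(G,S) be a Cayley graph of a finite group G and H a subgroup of G. Then H is a total perfect code in Γ (every vertex of Γ is adjacent to exactly one vertex of H) if and only if S is a left transversal of H in G. -/
/-- In the Cayley graph Cay(G,S), a subgroup H is a total perfect code (every vertex is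
adjacent to exactly one vertex of H) iff S is a left transversal of H in G. -/
theorem subgroup_total_perfect_code_iff_left_transversal {G : Type*} [Group G] [Fintype G]
    (S : Set G) (hS1 : (1 : G) ∉ S) (hS2 : S⁻¹ = S) (H : Subgroup G) :
    (∀ x : G, ∃! c : G, c ∈ (H : Set G) ∧ x * c⁻¹ ∈ S) ↔
      Subgroup.IsComplement S (H : Set G) := by
  rw [Subgroup.isComplement_iff_existsUnique]
  constructor
  · intro h x
    obtain ⟨c, ⟨hc, hs⟩, huniq⟩ := h x
    refine ⟨⟨⟨x * c⁻¹, hs⟩, ⟨c, hc⟩⟩, by simp, ?_⟩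
    rintro ⟨⟨s, hsS⟩, ⟨t, htH⟩⟩ hp
    simp only at hp
    have ht : t = c := huniq t ⟨htH, by rw [← hp]; simpa⟩
    subst ht
    have hs' : s = x * t⁻¹ := by rw [← hp]; group
    subst hs'
    rfl
  · intro h x
    obtain ⟨⟨⟨s, hsS⟩, ⟨t, htH⟩⟩, hp, huniq⟩ := h x
    simp only at hp
    refine ⟨t, ⟨htH, by rw [← hp]; simpa⟩, ?_⟩
    rintro c ⟨hc, hs⟩
    have := huniq ⟨⟨x * c⁻¹, hs⟩, ⟨c, hc⟩⟩ (by simp)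
    have := congrArg (fun p => (p.2 : G)) this; simpa using this
end

section
/- Let G be a finite group and H a normal subgroup of G. Then H is a perfect code in some Cayley graph of G if and only if for every g ∈ G with g² ∈ H there exists h ∈ H with (gh)² = e. -/
/-- `H` is a subgroup perfect code of `G`: `H` is a perfect code in some Cayley graph of
`G`, equivalently there is an inverse-closed left transversal of `H` in `G` containing
the identity. -/
def IsSubgroupPerfectCode {G : Type*} [Group G] (H : Subgroup G) : Prop :=
  ∃ L : Set G, L⁻¹ = L ∧ (1 : G) ∈ L ∧ Subgroup.IsComplement L (H : Set G)

/-- `H` is a subgroup total perfect code of `G`: `H` is a total perfect code in some Cayley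
graph of `G`, equivalently there is an inverse-closed subset of `G \ {e}` that is a left
transversal of `H` in `G`. -/
def IsSubgroupTotalPerfectCode {G : Type*} [Group G] (H : Subgroup G) : Prop :=
  ∃ S : Set G, S⁻¹ = S ∧ (1 : G) ∉ S ∧ Subgroup.IsComplement S (H : Set G)

/-- A normal subgroup H of a finite group G is a perfect code of G iff for every g with
g² ∈ H there exists h ∈ H with (gh)² = 1. -/
theorem normal_subgroup_perfect_code_iff {G : Type*} [Group G] [Fintype G]
    (H : Subgroup G) (hH : H.Normal) :
    IsSubgroupPerfectCode H ↔ ∀ g : G, g ^ 2 ∈ H → ∃ h ∈ H, (g * h) ^ 2 = 1 := by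
  haveI := hH
  constructor
  · rintro ⟨L, hLinv, hL1, hLc⟩ g hg2
    obtain ⟨⟨l, hl⟩, hlg, hluniq⟩ :=
      Subgroup.isComplement_iff_existsUnique_inv_mul_mem.mp hLc g
    simp only at hlg
    -- l⁻¹ is also in L and represents the same coset
    have hlinv : l⁻¹ ∈ L := by
      rw [← hLinv]; simpa using hl
    have hconj : g⁻¹ * (l⁻¹ * g)⁻¹ * g ∈ H := by
      have := hH.conj_mem _ (H.inv_mem hlg) g⁻¹
      simpa using this
    have hlg' : (l⁻¹)⁻¹ * g ∈ H := by
      rw [inv_inv]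
      have h1 : l * g = g ^ 2 * (g⁻¹ * (l⁻¹ * g)⁻¹ * g) := by group
      rw [h1]
      exact H.mul_mem hg2 hconj
    have heq : (⟨l⁻¹, hlinv⟩ : L) = ⟨l, hl⟩ := hluniq ⟨l⁻¹, hlinv⟩ hlg'
    have hll : l⁻¹ = l := congrArg Subtype.val heq
    refine ⟨g⁻¹ * l, by simpa using H.inv_mem hlg, ?_⟩
    have hgl : g * (g⁻¹ * l) = l := by group
    rw [hgl, pow_two]
    nth_rewrite 2 [← hll]
    exact mul_inv_cancel l
  · intro hyp
    letI : LinearOrder (G ⧸ H) := IsWellOrder.linearOrder WellOrderingRel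
    have key : ∀ C : G ⧸ H, C⁻¹ = C → ∃ l : G, ((l : G ⧸ H) = C) ∧ l ^ 2 = 1 := by
      intro C hC
      obtain ⟨g, hg⟩ := QuotientGroup.mk_surjective C
      have hg2 : g ^ 2 ∈ H := by
        rw [← QuotientGroup.eq_one_iff]
        have e : ((g ^ 2 : G) : G ⧸ H) = C * C := by
          rw [pow_two, QuotientGroup.mk_mul, hg]
        rw [e]
        nth_rewrite 2 [← hC]
        exact mul_inv_cancel C
      obtain ⟨h, hh, hsq⟩ := hyp g hg2
      refine ⟨g * h, ?_, hsq⟩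
      have : ((h : G) : G ⧸ H) = 1 := (QuotientGroup.eq_one_iff h).mpr hh
      rw [QuotientGroup.mk_mul, this, mul_one, hg]
    choose sq hsq1 hsq2 using key
    set rep : G ⧸ H → G := fun C =>
      if C = 1 then 1
      else if h : C⁻¹ = C then sq C h
      else if C < C⁻¹ then C.out
      else (C⁻¹).out⁻¹ with hrep
    have hrep_mk : ∀ C : G ⧸ H, ((rep C : G) : G ⧸ H) = C := by
      intro C
      by_cases h1 : C = 1
      · simp [hrep, h1]
      by_cases h2 : C⁻¹ = C
      · simp [hrep, h1, h2, hsq1]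
      by_cases h3 : C < C⁻¹
      · simp only [hrep]
        rw [if_neg h1, dif_neg h2, if_pos h3, QuotientGroup.out_eq']
      · simp only [hrep]
        rw [if_neg h1, dif_neg h2, if_neg h3, QuotientGroup.mk_inv,
          QuotientGroup.out_eq', inv_inv]
    have hrep_inv : ∀ C : G ⧸ H, rep C⁻¹ = (rep C)⁻¹ := by
      intro C
      by_cases h1 : C = 1
      · subst h1; simp [hrep]
      by_cases h2 : C⁻¹ = C
      · rw [h2]
        have hs2 : rep C * rep C = 1 := by
          have e : rep C = sq C h2 := by simp [hrep, h1, h2]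
          rw [e, ← pow_two]
          exact hsq2 C h2
        exact eq_inv_of_mul_eq_one_left hs2
      have h1' : C⁻¹ ≠ 1 := fun h => h1 (by rw [← inv_inv C, h, inv_one])
      have h2' : (C⁻¹)⁻¹ ≠ C⁻¹ := by rw [inv_inv]; exact fun h => h2 h.symm
      by_cases h3 : C < C⁻¹
      · have h3' : ¬ (C⁻¹ < (C⁻¹)⁻¹) := by rw [inv_inv]; exact not_lt_of_gt h3
        simp only [hrep]
        rw [if_neg h1', dif_neg h2', if_neg h3', if_neg h1, dif_neg h2, if_pos h3, inv_inv]
      · have h3' : C⁻¹ < (C⁻¹)⁻¹ := by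
          rw [inv_inv]
          rcases lt_trichotomy C C⁻¹ with h | h | h
          · exact absurd h h3
          · exact absurd h.symm h2
          · exact h
        simp only [hrep]
        rw [if_neg h1', dif_neg h2', if_pos h3', if_neg h1, dif_neg h2, if_neg h3, inv_inv]
    refine ⟨Set.range rep, ?_, ?_, ?_⟩
    · ext x
      simp only [Set.mem_inv, Set.mem_range]
      constructor
      · rintro ⟨C, hC⟩
        exact ⟨C⁻¹, by rw [hrep_inv, hC, inv_inv]⟩
      · rintro ⟨C, hC⟩
        exact ⟨C⁻¹, by rw [hrep_inv, hC]⟩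
    · exact ⟨1, by simp [hrep]⟩
    · rw [Subgroup.isComplement_iff_existsUnique_inv_mul_mem]
      intro g
      refine ⟨⟨rep ((g : G) : G ⧸ H), Set.mem_range_self _⟩, ?_, ?_⟩
      · show (rep ((g : G) : G ⧸ H))⁻¹ * g ∈ H
        rw [← QuotientGroup.eq]
        exact hrep_mk _
      · rintro ⟨x, C, rfl⟩ hx
        have : ((rep C : G) : G ⧸ H) = ((g : G) : G ⧸ H) := by
          rw [QuotientGroup.eq]; exact hx
        rw [hrep_mk] at this
        simp [this]
end

section
/- Let G be a finite group and H a normal subgroup of G. Then H is a total perfect code in some Cayley graph of G if and only if |H| is even and for every g ∈ G with g² ∈ H there exists h ∈ H with (gh)² = e. -/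
/-- A normal subgroup H of a finite group G is a total perfect code of G iff |H| is even
and for every g with g² ∈ H there exists h ∈ H with (gh)² = 1. -/
theorem normal_subgroup_total_perfect_code_iff {G : Type*} [Group G] [Fintype G]
    (H : Subgroup G) (hH : H.Normal) :
    IsSubgroupTotalPerfectCode H ↔
      Even (Nat.card H) ∧ ∀ g : G, g ^ 2 ∈ H → ∃ h ∈ H, (g * h) ^ 2 = 1 := by
  haveI := hH
  constructor
  · rintro ⟨S, hSinv, hS1, hcomp⟩
    -- two elements of S in the same left coset of H coincide
    have key : ∀ x, x ∈ S → ∀ y, y ∈ S → x⁻¹ * y ∈ H → x = y := by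
      intro x hx y hy hxy
      have hu := hcomp.existsUnique y
      have h1 : (⟨⟨x, hx⟩, ⟨x⁻¹ * y, hxy⟩⟩ : S × (H : Set G)).1.1 *
          (⟨⟨x, hx⟩, ⟨x⁻¹ * y, hxy⟩⟩ : S × (H : Set G)).2.1 = y := by
        simp
      have h2 : (⟨⟨y, hy⟩, ⟨1, H.one_mem⟩⟩ : S × (H : Set G)).1.1 *
          (⟨⟨y, hy⟩, ⟨1, H.one_mem⟩⟩ : S × (H : Set G)).2.1 = y := by
        simp
      have := hu.unique h1 h2
      exact congrArg (fun p => (p.1 : G)) this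
    have hmemInv : ∀ x, x ∈ S → x⁻¹ ∈ S := by
      intro x hx
      rw [← hSinv]
      simpa using hx
    constructor
    · -- evenness: the representative of H in S is an involution of H
      obtain ⟨⟨⟨s, hs⟩, ⟨h, hh⟩⟩, heq, -⟩ := hcomp.existsUnique (1 : G)
      simp only at heq
      have hsH : s ∈ H := by
        have : s = h⁻¹ := eq_inv_of_mul_eq_one_left heq
        rw [this]; exact H.inv_mem hh
      have hss : s = s⁻¹ := key s hs s⁻¹ (hmemInv s hs) (H.mul_mem (H.inv_mem hsH) (H.inv_mem hsH))
      have hs2 : s ^ 2 = 1 := by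
        rw [pow_two]; nth_rewrite 2 [hss]; exact mul_inv_cancel s
      have hsne : s ≠ 1 := fun hc => hS1 (hc ▸ hs)
      have horder : orderOf (⟨s, hsH⟩ : H) = 2 := by
        apply orderOf_eq_prime
        · ext; simpa using hs2
        · intro hc
          exact hsne (by simpa using congrArg Subtype.val hc)
      rw [even_iff_two_dvd, ← horder]
      exact orderOf_dvd_natCard _
    · intro g hg
      obtain ⟨⟨⟨x, hx⟩, ⟨h, hh⟩⟩, heq, -⟩ := hcomp.existsUnique g
      simp only at heq
      -- x = g * h⁻¹, and x^2 ∈ H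
      have hxg : x = g * h⁻¹ := eq_mul_inv_of_mul_eq heq
      have hx2 : x ^ 2 ∈ H := by
        have : x ^ 2 = g ^ 2 * (g⁻¹ * h⁻¹ * g) * h⁻¹ := by rw [hxg]; simp [pow_two, mul_assoc]
        rw [this]
        exact H.mul_mem (H.mul_mem hg (by simpa using hH.conj_mem h⁻¹ (H.inv_mem hh) g⁻¹))
          (H.inv_mem hh)
      have hxx : x = x⁻¹ := by
        apply key x hx x⁻¹ (hmemInv x hx)
        have : x⁻¹ * x⁻¹ = (x ^ 2)⁻¹ := by group
        rw [this]
        exact H.inv_mem hx2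
      refine ⟨h⁻¹, H.inv_mem hh, ?_⟩
      rw [← hxg, pow_two]
      nth_rewrite 2 [hxx]
      exact mul_inv_cancel x
  · rintro ⟨heven, hc⟩
    haveI : Fintype H := Fintype.ofFinite _
    haveI : Fintype (G ⧸ H) := Fintype.ofFinite _
    -- an involution t in H
    obtain ⟨t, ht⟩ := exists_prime_orderOf_dvd_card (G := H) 2
      (by rwa [← Nat.card_eq_fintype_card, ← even_iff_two_dvd])
    have ht2 : (t : G) ^ 2 = 1 := by
      have := pow_orderOf_eq_one t
      rw [ht] at this
      simpa using congrArg Subtype.val this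
    have ht1 : (t : G) ≠ 1 := by
      intro hc'
      have : t = 1 := Subtype.ext hc'
      rw [this, orderOf_one] at ht
      norm_num at ht
    -- choice of involutive representative for self-inverse cosets
    have hsq : ∀ q : G ⧸ H, q ^ 2 = 1 → ∃ x : G, x ^ 2 = 1 ∧ (x : G ⧸ H) = q := by
      intro q hq
      have hout : ((q.out : G) : G ⧸ H) = q := QuotientGroup.out_eq' q
      have h2 : (q.out : G) ^ 2 ∈ H := by
        rw [← QuotientGroup.eq_one_iff]
        rw [pow_two, QuotientGroup.mk_mul, hout, ← pow_two]
        exact hq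
      obtain ⟨h, hh, hgh⟩ := hc q.out h2
      exact ⟨q.out * h, hgh, by rw [QuotientGroup.mk_mul_of_mem q.out hh, hout]⟩
    classical
    set ord : G ⧸ H → ℕ := fun q => (Fintype.equivFin (G ⧸ H) q : ℕ) with hord
    have hordinj : Function.Injective ord := fun a b hab =>
      (Fintype.equivFin (G ⧸ H)).injective (Fin.ext hab)
    set f : G ⧸ H → G := fun q =>
      if hq : q = 1 then (t : G)
      else if h2 : q ^ 2 = 1 then (hsq q h2).choose
      else if ord q < ord q⁻¹ then q.out else (q⁻¹.out)⁻¹ with hf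
    have hfmk : ∀ q, ((f q : G) : G ⧸ H) = q := by
      intro q
      simp only [hf]
      by_cases hq : q = 1
      · simp only [hq, dif_pos]
        rw [QuotientGroup.eq_one_iff]
        exact t.2
      · rw [dif_neg hq]
        by_cases h2 : q ^ 2 = 1
        · rw [dif_pos h2]
          exact (hsq q h2).choose_spec.2
        · rw [dif_neg h2]
          by_cases hlt : ord q < ord q⁻¹
          · rw [if_pos hlt]; exact QuotientGroup.out_eq' q
          · rw [if_neg hlt]
            have : ((q⁻¹.out : G) : G ⧸ H) = q⁻¹ := QuotientGroup.out_eq' q⁻¹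
            calc ((q⁻¹.out⁻¹ : G) : G ⧸ H) = ((q⁻¹.out : G) : G ⧸ H)⁻¹ := rfl
              _ = (q⁻¹)⁻¹ := by rw [this]
              _ = q := inv_inv q
    have hfinv : ∀ q, f q⁻¹ = (f q)⁻¹ := by
      intro q
      by_cases hq : q = 1
      · subst hq
        rw [inv_one, hf]
        simp only [dif_pos]
        exact (inv_eq_of_mul_eq_one_left (by rw [← pow_two]; exact ht2)).symm
      · by_cases h2 : q ^ 2 = 1
        · have hqinv : q⁻¹ = q := by
            rw [pow_two] at h2
            exact inv_eq_of_mul_eq_one_left h2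
          rw [hqinv]
          have hx2 : (f q) ^ 2 = 1 := by
            rw [hf]; simp only [dif_neg hq, dif_pos h2]
            exact (hsq q h2).choose_spec.1
          rw [pow_two] at hx2
          exact (inv_eq_of_mul_eq_one_left hx2).symm
        · have hq1' : q⁻¹ ≠ 1 := by
            intro hc'
            exact hq (by rw [← inv_inv q, hc', inv_one])
          have h2' : (q⁻¹) ^ 2 ≠ 1 := by
            intro hc'
            apply h2
            have : (q ^ 2)⁻¹ = 1 := by rw [← hc']; group
            rw [← inv_inv (q ^ 2), this, inv_one]
          have hne : ord q ≠ ord q⁻¹ := by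
            intro hc'
            have : q = q⁻¹ := hordinj hc'
            apply h2
            rw [pow_two]
            nth_rewrite 2 [this]
            exact mul_inv_cancel q
          by_cases hlt : ord q < ord q⁻¹
          · have hnlt : ¬ ord q⁻¹ < ord (q⁻¹)⁻¹ := by rw [inv_inv]; omega
            simp only [hf]
            simp only [dif_neg hq, dif_neg h2, dif_neg hq1', dif_neg h2', if_pos hlt, inv_inv]
            rw [if_neg (show ¬ ord q⁻¹ < ord q by omega)]
          · have hlt' : ord q⁻¹ < ord (q⁻¹)⁻¹ := by
              rw [inv_inv]
              omega
            simp only [hf]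
            simp only [dif_neg hq, dif_neg h2, dif_neg hq1', dif_neg h2', if_neg hlt, inv_inv]
            rw [if_pos (show ord q⁻¹ < ord q by omega)]
    refine ⟨Set.range f, ?_, ?_, ?_⟩
    · ext x
      simp only [Set.mem_inv, Set.mem_range]
      constructor
      · rintro ⟨q, hqx⟩
        exact ⟨q⁻¹, by rw [hfinv, hqx, inv_inv]⟩
      · rintro ⟨q, hqx⟩
        exact ⟨q⁻¹, by rw [hfinv, hqx]⟩
    · rintro ⟨q, hq1⟩
      have : q = 1 := by rw [← hfmk q, hq1, QuotientGroup.mk_one]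
      rw [this, hf] at hq1
      simp only [dif_pos] at hq1
      exact ht1 hq1
    · exact Subgroup.isComplement_range_left hfmk
end

section
/- Let G be a finite group and H a normal subgroup of G. If |H| is odd or the index [G:H] is odd, then H is a perfect code in some Cayley graph of G, i.e., there exists an inverse-closed left transversal of H in G containing the identity. -/
/-- For a self-inverse nontrivial coset, under the oddness hypothesis there is a
representative of order dividing 2. -/
lemma exists_sq_one_lift {G : Type*} [Group G] [Fintype G] (H : Subgroup G) [H.Normal]
    (hodd : Odd (Nat.card H) ∨ Odd H.index) (q : G ⧸ H) (hq1 : q ≠ 1) (hq : q * q = 1) :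
    ∃ x : G, (x : G ⧸ H) = q ∧ x * x = 1 := by
  rcases hodd with hHodd | hIodd
  · obtain ⟨x, rfl⟩ := QuotientGroup.mk_surjective q
    have hx2 : x * x ∈ H := by
      rw [← QuotientGroup.eq_one_iff]
      exact_mod_cast hq
    set m := orderOf (x * x) with hm
    have hmdvd : m ∣ Nat.card H := H.orderOf_dvd_natCard hx2
    have hmodd : Odd m := by
      rw [Nat.odd_iff] at hHodd ⊢
      rcases Nat.mod_two_eq_zero_or_one m with h | h
      · exfalso
        have h2 : (2 : ℕ) ∣ m := Nat.dvd_of_mod_eq_zero h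
        have : (2 : ℕ) ∣ Nat.card H := dvd_trans h2 hmdvd
        omega
      · exact h
    set k := (x * x) ^ ((m + 1) / 2) with hkdef
    have hk2 : k * k = x * x := by
      rw [hkdef, ← pow_add]
      have h2 : (m + 1) / 2 + (m + 1) / 2 = m + 1 := by
        rw [Nat.odd_iff] at hmodd; omega
      rw [h2, pow_succ, pow_orderOf_eq_one, one_mul]
    have hcomm : Commute x k := ((Commute.refl x).mul_right (Commute.refl x)).pow_right _
    have hci : k⁻¹ * x = x * k⁻¹ := hcomm.inv_right.eq.symm
    refine ⟨x * k⁻¹, ?_, ?_⟩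
    · have hkH : (k⁻¹ : G) ∈ H := H.inv_mem (H.pow_mem hx2 _)
      calc ((x * k⁻¹ : G) : G ⧸ H)
          = (x : G ⧸ H) * ((k⁻¹ : G) : G ⧸ H) := by rw [QuotientGroup.mk_mul]
        _ = (x : G ⧸ H) := by rw [(QuotientGroup.eq_one_iff _).mpr hkH, mul_one]
    · calc x * k⁻¹ * (x * k⁻¹)
          = x * (k⁻¹ * x) * k⁻¹ := by rw [mul_assoc, mul_assoc, mul_assoc]
        _ = x * (x * k⁻¹) * k⁻¹ := by rw [hci]
        _ = x * x * (k⁻¹ * k⁻¹) := by rw [← mul_assoc, mul_assoc]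
        _ = x * x * (k * k)⁻¹ := by rw [mul_inv_rev]
        _ = 1 := by rw [hk2, mul_inv_cancel]
  · exfalso
    haveI : Fact (Nat.Prime 2) := ⟨Nat.prime_two⟩
    have h2 : orderOf q = 2 := orderOf_eq_prime (by rw [pow_two]; exact hq) hq1
    have hdvd : orderOf q ∣ Nat.card (G ⧸ H) := orderOf_dvd_natCard q
    rw [h2] at hdvd
    have hidx : H.index = Nat.card (G ⧸ H) := rfl
    rw [Nat.odd_iff] at hIodd
    rw [← hidx] at hdvd
    omega

/-- If H is a normal subgroup of a finite group G with |H| odd or [G:H] odd, then H is a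
perfect code of G. -/
theorem normal_subgroup_perfect_code_of_odd {G : Type*} [Group G] [Fintype G]
    (H : Subgroup G) (hH : H.Normal) (hodd : Odd (Nat.card H) ∨ Odd H.index) :
    IsSubgroupPerfectCode H := by
  classical
  haveI := hH
  obtain ⟨n, ⟨e⟩⟩ := Finite.exists_equiv_fin (G ⧸ H)
  choose w hw1 hw2 using fun q h1 h2 => exists_sq_one_lift H hodd q h1 h2
  set f : G ⧸ H → G := fun q =>
    if h1 : q = 1 then 1
    else if h2 : q * q = 1 then w q h1 h2
    else if e q < e (q⁻¹) then Quotient.out q else (Quotient.out (q⁻¹ : G ⧸ H))⁻¹ with hf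
  have hout : ∀ q : G ⧸ H, ((Quotient.out q : G) : G ⧸ H) = q := fun q => QuotientGroup.out_eq' q
  have hfmk : ∀ q : G ⧸ H, ((f q : G) : G ⧸ H) = q := by
    intro q
    rw [hf]
    by_cases h1 : q = 1
    · simp [h1]
    · by_cases h2 : q * q = 1
      · simp only [dif_neg h1, dif_pos h2]
        exact hw1 q h1 h2
      · simp only [dif_neg h1, dif_neg h2]
        by_cases h3 : e q < e (q⁻¹)
        · rw [if_pos h3]; exact hout q
        · rw [if_neg h3, QuotientGroup.mk_inv, hout, inv_inv]
  have hfinv : ∀ q : G ⧸ H, f (q⁻¹) = (f q)⁻¹ := by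
    intro q
    by_cases h1 : q = 1
    · subst h1; rw [inv_one, hf]; simp
    · by_cases h2 : q * q = 1
      · have hqi : q⁻¹ = q := inv_eq_of_mul_eq_one_right h2
        rw [hqi]
        have hsq : f q * f q = 1 := by
          rw [hf]; simp only [dif_neg h1, dif_pos h2]; exact hw2 q h1 h2
        exact (inv_eq_of_mul_eq_one_right hsq).symm
      · have hne : q⁻¹ ≠ q := fun h => h2 (mul_eq_one_iff_eq_inv.mpr h.symm)
        have h1' : q⁻¹ ≠ 1 := fun h => h1 (by rw [← inv_inv q, h, inv_one])
        have h2' : ¬ (q⁻¹ * q⁻¹ = 1) := by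
          intro h
          apply h2
          have := congrArg (fun z => z⁻¹) h
          simpa [mul_inv_rev] using this
        have hene : e q ≠ e (q⁻¹) := fun h => hne (e.injective h.symm)
        rw [hf]
        simp only [dif_neg h1, dif_neg h2, dif_neg h1', dif_neg h2', inv_inv]
        by_cases h3 : e q < e (q⁻¹)
        · have h3' : ¬ e (q⁻¹) < e q := by omega
          rw [if_pos h3, if_neg h3']
        · have h3' : e (q⁻¹) < e q := by
            rcases lt_trichotomy (e q) (e (q⁻¹))  with h | h | h
            · exact absurd h h3
            · exact absurd h hene
            · exact h
          rw [if_pos h3', if_neg h3, inv_inv]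
  refine ⟨Set.range f, ?_, ?_, ?_⟩
  · ext x
    simp only [Set.mem_inv, Set.mem_range]
    constructor
    · rintro ⟨q, hq⟩
      exact ⟨q⁻¹, by rw [hfinv, hq, inv_inv]⟩
    · rintro ⟨q, hq⟩
      refine ⟨q⁻¹, ?_⟩
      rw [hfinv, hq]
  · exact ⟨1, by rw [hf]; simp⟩
  · exact Subgroup.isComplement_range_left hfmk
end

section
/- Let G be a finite group and H a normal subgroup of G with |H| even and index [G:H] odd. Then H is a total perfect code in some Cayley graph of G, i.e., there exists an inverse-closed subset S ⊆ G \ {e} that is a left transversal of H in G. -/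
/-- If H is a normal subgroup of a finite group G with |H| even and [G:H] odd, then H is a
total perfect code of G. -/
theorem normal_subgroup_total_perfect_code_of_even_odd {G : Type*} [Group G] [Fintype G]
    (H : Subgroup G) (hH : H.Normal) (heven : Even (Nat.card H)) (hodd : Odd H.index) :
    IsSubgroupTotalPerfectCode H := by
  classical
  -- Obtain an involution `t` in `H` by Cauchy's theorem.
  obtain ⟨t, ht⟩ :=
    exists_prime_orderOf_dvd_card' (G := H) 2 (even_iff_two_dvd.mp heven)
  have ht2 : (t : G) * (t : G) = 1 := by
    have : t * t = 1 := by
      have := pow_orderOf_eq_one t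
      rwa [ht, pow_two] at this
    exact_mod_cast congrArg (Subtype.val) this
  have htinv : (t : G)⁻¹ = (t : G) := by
    rw [inv_eq_iff_mul_eq_one, ht2]
  have ht1 : (t : G) ≠ 1 := by
    intro h
    have : t = 1 := Subtype.ext h
    rw [this, orderOf_one] at ht
    norm_num at ht
  -- The squaring map on the odd-order quotient is a bijection.
  have hcop : (Nat.card (G ⧸ H)).Coprime 2 := by
    have : Nat.card (G ⧸ H) = H.index := rfl
    rw [this]
    exact hodd.coprime_two_right
  set r : G ⧸ H ≃ G ⧸ H := (powCoprime hcop).symm with hr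
  have hr2 : ∀ q : G ⧸ H, r q * r q = q := by
    intro q
    have := (powCoprime hcop).apply_symm_apply q
    rwa [powCoprime_apply, pow_two] at this
  have hrinv : ∀ q : G ⧸ H, r q⁻¹ = (r q)⁻¹ := by
    intro q
    rw [hr, Equiv.symm_apply_eq, powCoprime_inv hcop, Equiv.apply_symm_apply]
  -- The inverse-closed transversal.
  set f : G ⧸ H → G := fun q => (r q).out * t * ((r q⁻¹).out)⁻¹ with hf
  have hmk : ∀ q : G ⧸ H, (QuotientGroup.mk (f q) : G ⧸ H) = q := by
    intro q
    have hmt : (QuotientGroup.mk (t : G) : G ⧸ H) = 1 :=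
      (QuotientGroup.eq_one_iff _).mpr t.2
    calc (QuotientGroup.mk (f q) : G ⧸ H)
        = QuotientGroup.mk ((r q).out) * QuotientGroup.mk (t : G) *
            (QuotientGroup.mk ((r q⁻¹).out))⁻¹ := by
          simp [hf, QuotientGroup.mk_mul, QuotientGroup.mk_inv]
      _ = r q * 1 * (r q⁻¹)⁻¹ := by rw [hmt, QuotientGroup.out_eq', QuotientGroup.out_eq']
      _ = q := by rw [hrinv, inv_inv, mul_one, hr2]
  have hfinv : ∀ q : G ⧸ H, (f q)⁻¹ = f q⁻¹ := by
    intro q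
    simp only [hf, mul_inv_rev, inv_inv, inv_inv q, htinv, mul_assoc]
  refine ⟨Set.range f, ?_, ?_, ?_⟩
  · ext x
    simp only [Set.mem_inv, Set.mem_range]
    constructor
    · rintro ⟨q, hq⟩
      exact ⟨q⁻¹, by rw [← hfinv, hq, inv_inv]⟩
    · rintro ⟨q, hq⟩
      exact ⟨q⁻¹, by rw [← hfinv, hq]⟩
  · rintro ⟨q, hq⟩
    have hq1 : q = 1 := by rw [← hmk q, hq, QuotientGroup.mk_one]
    rw [hq1] at hq
    have hr1 : r (1 : G ⧸ H) = 1 := by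
      rw [hr, Equiv.symm_apply_eq, powCoprime_one]
    apply ht1
    have : (r (1 : G ⧸ H)).out * (t : G) * ((r (1 : G ⧸ H)⁻¹).out)⁻¹ = 1 := hq
    rw [inv_one] at this
    have h2 : (r (1 : G ⧸ H)).out * (t : G) = (r (1 : G ⧸ H)).out := by
      rw [← mul_inv_eq_one] at this ⊢
      simpa using this
    exact mul_left_cancel (a := (r (1 : G ⧸ H)).out)
      (by rw [h2, mul_one])
  · exact Subgroup.isComplement_range_left hmk
end

section
/- Let G be a finite group of odd order. Then every normal subgroup of G is a perfect code of G, i.e., for every normal subgroup H there exists an inverse-closed left transversal of H in G containing e. -/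
/-- Every normal subgroup of a finite group of odd order is a perfect code of the group. -/
theorem normal_subgroup_perfect_code_of_odd_order {G : Type*} [Group G] [Fintype G]
    (hG : Odd (Nat.card G)) (H : Subgroup G) (hH : H.Normal) :
    IsSubgroupPerfectCode H := by
  classical
  -- the quotient group has odd order
  have hodd : Odd (Nat.card (G ⧸ H)) := hG.of_dvd_nat (Subgroup.card_quotient_dvd_card H)
  have hcop : (Nat.card (G ⧸ H)).Coprime 2 := hodd.coprime_two_right
  -- square root map on the quotient
  set σ : G ⧸ H ≃ G ⧸ H := (powCoprime hcop).symm with hσ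
  have hσ_sq : ∀ q : G ⧸ H, (σ q) ^ 2 = q := fun q => (powCoprime hcop).apply_symm_apply q
  have hσ_inv : ∀ q : G ⧸ H, σ q⁻¹ = (σ q)⁻¹ := by
    intro q
    apply (powCoprime hcop).injective
    rw [powCoprime_inv hcop, Equiv.apply_symm_apply, Equiv.apply_symm_apply]
  have hσ_one : σ 1 = 1 := by
    apply (powCoprime hcop).injective
    rw [Equiv.apply_symm_apply, powCoprime_one]
  -- the section
  set f : G ⧸ H → G := fun q => (σ q).out * (σ q⁻¹).out⁻¹ with hf
  have hsec : ∀ q : G ⧸ H, (↑(f q) : G ⧸ H) = q := by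
    intro q
    have : ((σ q).out * (σ q⁻¹).out⁻¹ : G) = (σ q).out * (σ q⁻¹).out⁻¹ := rfl
    show ((f q : G) : G ⧸ H) = q
    rw [hf]
    simp only
    rw [QuotientGroup.mk_mul, QuotientGroup.mk_inv, QuotientGroup.out_eq',
      QuotientGroup.out_eq', hσ_inv, inv_inv, ← sq, hσ_sq]
  have hfinv : ∀ q : G ⧸ H, f q⁻¹ = (f q)⁻¹ := by
    intro q
    rw [hf]
    simp only [inv_inv, mul_inv_rev]
  refine ⟨Set.range f, ?_, ?_, Subgroup.isComplement_range_left hsec⟩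
  · ext x
    simp only [Set.mem_inv, Set.mem_range]
    constructor
    · rintro ⟨q, hq⟩
      exact ⟨q⁻¹, by rw [hfinv, hq, inv_inv]⟩
    · rintro ⟨q, rfl⟩
      exact ⟨q⁻¹, by rw [hfinv]⟩
  · refine ⟨1, ?_⟩
    rw [hf]
    simp only [inv_one, hσ_one, mul_inv_cancel]
end

section
/- A finite group G of odd order has no subgroup that is a total perfect code of G: no subgroup H of G admits an inverse-closed subset S of G \ {e} that is a left transversal of H in G. -/
/-- A finset closed under a fixed-point-free involution has even cardinality. -/
lemma even_card_of_fixedPointFree_involution {α : Type*} [DecidableEq α] (f : α → α) :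
    ∀ s : Finset α, (∀ x ∈ s, f x ∈ s) → (∀ x ∈ s, f (f x) = x) → (∀ x ∈ s, f x ≠ x) →
      Even s.card := by
  intro s
  induction s using Finset.strongInduction with
  | _ s ih =>
    intro hmem hinv hne
    rcases s.eq_empty_or_nonempty with rfl | ⟨a, ha⟩
    · simp
    · have hfa : f a ∈ s := hmem a ha
      have hne_a : f a ≠ a := hne a ha
      set t : Finset α := s \ {a, f a} with ht
      have hsub : {a, f a} ⊆ s := by
        intro x hx
        simp only [Finset.mem_insert, Finset.mem_singleton] at hx
        rcases hx with rfl | rfl <;> assumption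
      have hcard : s.card = t.card + 2 := by
        have h2 : ({a, f a} : Finset α).card = 2 := by
          rw [Finset.card_insert_of_notMem (by simpa using hne_a.symm),
            Finset.card_singleton]
        have h3 : t.card = s.card - 2 := by
          rw [ht, Finset.card_sdiff_of_subset hsub, h2]
        have hle := Finset.card_le_card hsub
        rw [h2] at hle
        omega
      have htss : t ⊂ s := by
        refine Finset.ssubset_iff_of_subset (Finset.sdiff_subset) |>.2 ⟨a, ha, ?_⟩
        simp [ht]
      have hteven : Even t.card := by
        refine ih t htss ?_ ?_ ?_
        · intro x hx
          simp only [ht, Finset.mem_sdiff, Finset.mem_insert, Finset.mem_singleton,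
            not_or] at hx ⊢
          obtain ⟨hxs, hxa, hxfa⟩ := hx
          refine ⟨hmem x hxs, ?_, ?_⟩
          · intro h
            apply hxfa
            rw [← hinv x hxs, h]
          · intro h
            apply hxa
            have := congrArg f h
            rwa [hinv x hxs, hinv a ha] at this
        · intro x hx
          exact hinv x (Finset.mem_sdiff.1 hx).1
        · intro x hx
          exact hne x (Finset.mem_sdiff.1 hx).1
      rw [hcard]
      exact hteven.add (by decide)

/-- A finite group of odd order has no subgroup total perfect code. -/
theorem no_subgroup_total_perfect_code_of_odd_order {G : Type*} [Group G] [Fintype G]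
    (hG : Odd (Nat.card G)) (H : Subgroup G) :
    ¬ IsSubgroupTotalPerfectCode H := by
  classical
  rintro ⟨S, hSinv, h1, hcompl⟩
  -- |S| * |H| = |G| is odd, so |S| is odd
  have hmul : Nat.card S * Nat.card H = Nat.card G := hcompl.card_mul
  have hSodd : Odd (Nat.card S) := by
    rcases Nat.even_or_odd (Nat.card S) with he | ho
    · exfalso
      have : Even (Nat.card G) := by
        rw [← hmul]; exact he.mul_right _
      exact (Nat.not_even_iff_odd.2 hG) this
    · exact ho
  -- inversion is a fixed-point-free involution on S
  have hSeven : Even (Nat.card S) := by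
    have hfin : Nat.card S = S.toFinset.card := by
      rw [Nat.card_eq_fintype_card, Set.toFinset_card]
    rw [hfin]
    refine even_card_of_fixedPointFree_involution (fun x => x⁻¹) S.toFinset ?_ ?_ ?_
    · intro x hx
      rw [Set.mem_toFinset] at hx ⊢
      rw [← hSinv]
      simpa using hx
    · intro x _; simp
    · intro x hx
      rw [Set.mem_toFinset] at hx
      intro hxx
      have hxx' : x⁻¹ = x := hxx
      have hx2 : x ^ 2 = 1 := by
        rw [pow_two]; nth_rewrite 1 [← hxx']; exact inv_mul_cancel x
      have hdvd2 : orderOf x ∣ 2 := orderOf_dvd_of_pow_eq_one hx2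
      have hdvdG : orderOf x ∣ Nat.card G := by
        rw [Nat.card_eq_fintype_card]; exact orderOf_dvd_card
      have hx1 : x = 1 := by
        have : orderOf x = 1 ∨ orderOf x = 2 := by
          rcases (Nat.dvd_prime Nat.prime_two).1 hdvd2 with h | h
          · exact Or.inl h
          · exact Or.inr h
        rcases this with h | h
        · exact orderOf_eq_one_iff.1 h
        · exfalso
          rw [h] at hdvdG
          rcases hG with ⟨k, hk⟩
          omega
      exact h1 (hx1 ▸ hx)
  exact (Nat.not_even_iff_odd.2 hSodd) hSeven
end

section
/- Let G be a finite abelian group with Sylow 2-subgroup P, and H a subgroup of G. Then H is a perfect code of G if and only if H ∩ P is a perfect code of P. -/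
theorem code_of_sq {G : Type*} [CommGroup G] (H : Subgroup G)
    (hsq : ∀ g : G, g ^ 2 ∈ H → ∃ h ∈ H, (g * h) ^ 2 = 1) :
    IsSubgroupPerfectCode H := by
  classical
  have ht : ∀ C : G ⧸ H, ∃ y : G, (y : G ⧸ H) = C ∧ (C ^ 2 = 1 → y ^ 2 = 1) ∧ (C = 1 → y = 1) := by
    intro C
    by_cases hC1 : C = 1
    · exact ⟨1, by simp [hC1]⟩
    by_cases hC : C ^ 2 = 1
    · have hout : ((C.out : G) : G ⧸ H) = C := C.out_eq'
      have hsqH : (C.out) ^ 2 ∈ H := by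
        rw [← QuotientGroup.eq_one_iff]
        rw [show ((C.out ^ 2 : G) : G ⧸ H) = ((C.out : G) : G ⧸ H) ^ 2 from rfl, hout, hC]
      obtain ⟨h, hh, hyy⟩ := hsq C.out hsqH
      refine ⟨C.out * h, ?_, fun _ => hyy, fun h1 => absurd h1 hC1⟩
      rw [QuotientGroup.mk_mul, (QuotientGroup.eq_one_iff h).mpr hh, mul_one, hout]
    · exact ⟨C.out, C.out_eq', fun h => absurd h hC, fun h1 => absurd h1 hC1⟩
  choose t htmk htsq ht1 using ht
  let s : Setoid (G ⧸ H) := ⟨fun C D => D = C ∨ D = C⁻¹, by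
    constructor
    · exact fun C => Or.inl rfl
    · rintro C D (rfl | rfl)
      · exact Or.inl rfl
      · exact Or.inr (inv_inv C).symm
    · rintro C D E (rfl | rfl) (rfl | rfl)
      · exact Or.inl rfl
      · exact Or.inr rfl
      · exact Or.inr rfl
      · exact Or.inl (inv_inv C)⟩
  let rep : G ⧸ H → G ⧸ H := fun C => (Quotient.mk s C).out
  have hrep_mem : ∀ C, rep C = C ∨ rep C = C⁻¹ := by
    intro C
    show (Quotient.mk s C).out = C ∨ (Quotient.mk s C).out = C⁻¹
    set o := (Quotient.mk s C).out with ho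
    have h : C = o ∨ C = o⁻¹ := @Quotient.mk_out _ s C
    rcases h with h | h
    · exact Or.inl h.symm
    · refine Or.inr ?_
      rw [h, inv_inv]
  have hrep_inv : ∀ C : G ⧸ H, rep C⁻¹ = rep C := by
    intro C
    have : (Quotient.mk s C⁻¹) = (Quotient.mk s C) := Quotient.sound (Or.inr (inv_inv C).symm)
    simp only [rep, this]
  let f : G ⧸ H → G := fun C => if C = rep C then t C else (t (rep C))⁻¹
  have hfmk : ∀ C, ((f C : G) : G ⧸ H) = C := by
    intro C
    by_cases h : C = rep C
    · simp only [f, if_pos h]; exact htmk C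
    · have hrc : rep C = C⁻¹ := (hrep_mem C).resolve_left (fun hh => h hh.symm)
      simp only [f, if_neg h]
      rw [show (((t (rep C))⁻¹ : G) : G ⧸ H) = ((t (rep C) : G) : G ⧸ H)⁻¹ from rfl,
        htmk, hrc, inv_inv]
  have hf1 : f 1 = 1 := by
    have h1 : rep (1 : G ⧸ H) = 1 := by
      rcases hrep_mem 1 with h | h
      · exact h
      · simpa using h
    simp only [f, if_pos h1.symm]
    exact ht1 _ rfl
  have hfinv : ∀ C : G ⧸ H, f C⁻¹ = (f C)⁻¹ := by
    intro C
    by_cases hC : C = C⁻¹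
    · have hC2 : C ^ 2 = 1 := by
        rw [pow_two]; nth_rewrite 2 [hC]; exact mul_inv_cancel C
      have hrc : rep C = C := by
        rcases hrep_mem C with h | h
        · exact h
        · rw [h, ← hC]
      have hfC : f C = t C := by simp only [f, if_pos hrc.symm]
      have hsq1 : (f C) ^ 2 = 1 := by rw [hfC]; exact htsq C hC2
      rw [← hC]
      exact (inv_eq_of_mul_eq_one_left (by rw [← pow_two]; exact hsq1)).symm
    · rcases hrep_mem C with hrc | hrc
      · have hfC : f C = t C := by simp only [f, if_pos hrc.symm]
        have hne : ¬ (C⁻¹ = rep C⁻¹) := fun hh => hC (by rw [hh, hrep_inv, hrc])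
        rw [hfC]
        simp only [f, if_neg hne, hrep_inv, hrc]
      · have hne : ¬ (C = rep C) := by rw [hrc]; exact hC
        have heq : C⁻¹ = rep C⁻¹ := by rw [hrep_inv, hrc]
        have hfC : f C = (t (rep C))⁻¹ := by simp only [f, if_neg hne]
        have hfCi : f C⁻¹ = t C⁻¹ := by simp only [f, if_pos heq]
        rw [hfCi, hfC, hrc, inv_inv]
  refine ⟨Set.range f, ?_, ⟨1, hf1⟩, ?_⟩
  · ext x
    simp only [Set.mem_inv, Set.mem_range]
    constructor
    · rintro ⟨C, hCx⟩
      exact ⟨C⁻¹, by rw [hfinv, hCx, inv_inv]⟩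
    · rintro ⟨C, hCx⟩
      exact ⟨C⁻¹, by rw [hfinv, hCx]⟩
  · exact Subgroup.isComplement_range_left hfmk

theorem sq_of_code {G : Type*} [CommGroup G] (H : Subgroup G)
    (hcode : IsSubgroupPerfectCode H) :
    ∀ g : G, g ^ 2 ∈ H → ∃ h ∈ H, (g * h) ^ 2 = 1 := by
  obtain ⟨L, hLinv, hL1, hc⟩ := hcode
  intro g hg
  obtain ⟨⟨⟨l, hl⟩, ⟨h, hh⟩⟩, heq, huniq⟩ := hc.existsUnique g
  simp only at heq
  have hl' : l⁻¹ ∈ L := hLinv ▸ Set.inv_mem_inv.mpr hl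
  have d1 : ((⟨⟨l⁻¹, hl'⟩, ⟨h⁻¹, inv_mem hh⟩⟩ : L × (H : Set G)).1.1 *
      (⟨⟨l⁻¹, hl'⟩, ⟨h⁻¹, inv_mem hh⟩⟩ : L × (H : Set G)).2.1) = g⁻¹ := by
    simp only [← heq, mul_inv]
  have hmem2 : h * (g ^ 2)⁻¹ ∈ H := mul_mem hh (inv_mem hg)
  have d2 : ((⟨⟨l, hl⟩, ⟨h * (g ^ 2)⁻¹, hmem2⟩⟩ : L × (H : Set G)).1.1 *
      (⟨⟨l, hl⟩, ⟨h * (g ^ 2)⁻¹, hmem2⟩⟩ : L × (H : Set G)).2.1) = g⁻¹ := by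
    simp only [← mul_assoc, heq]
    group
  obtain ⟨⟨pl, ph⟩, hp, hpu⟩ := hc.existsUnique g⁻¹
  have e1 := hpu _ d1
  have e2 := hpu _ d2
  have e3 := e2.trans e1.symm
  have hhh : h * (g ^ 2)⁻¹ = h⁻¹ := by
    have := congrArg (fun x => (x.2 : G)) e3
    simpa using this
  have hg2 : g ^ 2 = h ^ 2 := by
    have h5 : g ^ 2 * h⁻¹ = h := by
      rw [← hhh, mul_comm h, ← mul_assoc, mul_inv_cancel, one_mul]
    calc g ^ 2 = g ^ 2 * h⁻¹ * h := by group
    _ = h * h := by rw [h5]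
    _ = h ^ 2 := (pow_two h).symm
  exact ⟨h⁻¹, inv_mem hh, by rw [mul_pow, hg2]; group⟩


theorem mem_sylow_two {G : Type*} [CommGroup G] [Fintype G] (P : Sylow 2 G)
    (x : G) (k : ℕ) (hx : x ^ (2 ^ k) = 1) : x ∈ P.toSubgroup := by
  have hp : IsPGroup 2 (Subgroup.zpowers x) := by
    intro g
    refine ⟨k, ?_⟩
    have hdvd : orderOf (g : G) ∣ 2 ^ k :=
      dvd_trans (orderOf_dvd_of_mem_zpowers g.2) (orderOf_dvd_of_pow_eq_one hx)
    have : (g : G) ^ (2 ^ k) = 1 := orderOf_dvd_iff_pow_eq_one.mp hdvd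
    exact Subtype.ext (by push_cast; exact this)
  obtain ⟨Q, hQ⟩ := hp.exists_le_sylow
  haveI : Unique (Sylow 2 G) := Sylow.unique_of_normal Q inferInstance
  have : Q = P := Subsingleton.elim Q P
  exact this ▸ hQ (Subgroup.mem_zpowers x)

theorem sqG_to_sqP {G : Type*} [CommGroup G] [Fintype G] (P : Sylow 2 G) (H : Subgroup G)
    (hG : ∀ g : G, g ^ 2 ∈ H → ∃ h ∈ H, (g * h) ^ 2 = 1) :
    ∀ q : ↥P.toSubgroup, q ^ 2 ∈ H.subgroupOf P.toSubgroup →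
      ∃ h ∈ H.subgroupOf P.toSubgroup, (q * h) ^ 2 = 1 := by
  intro q hq2
  have hq2' : (q : G) ^ 2 ∈ H := by
    simpa [Subgroup.mem_subgroupOf] using hq2
  obtain ⟨h, hh, hph⟩ := hG (q : G) hq2'
  obtain ⟨k, hk⟩ := P.2 q
  have hk' : (q : G) ^ (2 ^ k) = 1 := by
    have := Subtype.ext_iff.mp hk
    push_cast at this
    exact this
  have hph' : (q : G) ^ 2 * h ^ 2 = 1 := by rwa [mul_pow] at hph
  have e : h ^ 2 = (((q : G)) ^ 2)⁻¹ := by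
    rwa [mul_comm, mul_eq_one_iff_eq_inv] at hph'
  have hh2 : h ^ (2 ^ (k + 1)) = 1 := by
    calc h ^ 2 ^ (k + 1) = (h ^ 2) ^ 2 ^ k := by rw [← pow_mul, pow_succ']
    _ = ((((q : G)) ^ 2)⁻¹) ^ 2 ^ k := by rw [e]
    _ = ((((q : G)) ^ 2 ^ k) ^ 2)⁻¹ := by
        rw [← inv_pow, ← pow_mul, ← pow_mul, mul_comm, inv_pow]
    _ = 1 := by rw [hk', one_pow, inv_one]
  have hP : h ∈ P.toSubgroup := mem_sylow_two P h (k + 1) hh2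
  refine ⟨⟨h, hP⟩, ?_, ?_⟩
  · simpa [Subgroup.mem_subgroupOf] using hh
  · exact Subtype.ext (by push_cast; exact hph)

theorem sqP_to_sqG {G : Type*} [CommGroup G] [Fintype G] (P : Sylow 2 G) (H : Subgroup G)
    (hP : ∀ q : ↥P.toSubgroup, q ^ 2 ∈ H.subgroupOf P.toSubgroup →
      ∃ h ∈ H.subgroupOf P.toSubgroup, (q * h) ^ 2 = 1) :
    ∀ g : G, g ^ 2 ∈ H → ∃ h ∈ H, (g * h) ^ 2 = 1 := by
  intro g hg2
  set N := Fintype.card G with hN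
  set a := N.factorization 2 with ha
  set m := N / 2 ^ a with hm
  have hN0 : N ≠ 0 := Fintype.card_ne_zero
  have hodd : Odd m := Nat.odd_iff.mpr (Nat.two_dvd_ne_zero.mp (by rw [hm, ha]; exact Nat.not_dvd_ordCompl Nat.prime_two hN0))
  obtain ⟨r, hr⟩ := hodd
  have hxord : (g ^ m) ^ (2 ^ a) = 1 := by
    rw [← pow_mul, mul_comm, hm, ha, Nat.ordProj_mul_ordCompl_eq_self N 2, hN, pow_card_eq_one]
  have hxP : g ^ m ∈ P.toSubgroup := mem_sylow_two P _ a hxord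
  have hX2 : (⟨g ^ m, hxP⟩ : ↥P.toSubgroup) ^ 2 ∈ H.subgroupOf P.toSubgroup := by
    simp only [Subgroup.mem_subgroupOf]
    push_cast
    rw [← pow_mul, mul_comm, pow_mul]
    exact pow_mem hg2 m
  obtain ⟨hh, hhmem, hXh⟩ := hP _ hX2
  have hmemH : (hh : G) ∈ H := by simpa [Subgroup.mem_subgroupOf] using hhmem
  have hGeq : (g ^ m * (hh : G)) ^ 2 = 1 := by
    have := Subtype.ext_iff.mp hXh
    push_cast at this
    exact this
  refine ⟨(hh : G) * (g ^ 2) ^ r, mul_mem hmemH (pow_mem hg2 r), ?_⟩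
  have key : (g * ((hh : G) * (g ^ 2) ^ r)) ^ 2 = (g ^ m * (hh : G)) ^ 2 := by
    calc (g * ((hh : G) * (g ^ 2) ^ r)) ^ 2
        = g ^ 2 * ((hh : G) ^ 2 * ((g ^ 2) ^ r) ^ 2) := by rw [mul_pow, mul_pow]
    _ = (g ^ 2) ^ (r * 2 + 1) * (hh : G) ^ 2 := by
        rw [← pow_mul]
        simp [pow_succ, mul_comm, mul_assoc, mul_left_comm]
    _ = (g ^ m) ^ 2 * (hh : G) ^ 2 := by
        rw [show r * 2 + 1 = m by omega, pow_right_comm]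
    _ = (g ^ m * (hh : G)) ^ 2 := (mul_pow _ _ _).symm
  rw [key, hGeq]

/-- Let G be a finite abelian group with Sylow 2-subgroup P and H a subgroup of G.
Then H is a perfect code of G iff H ∩ P is a perfect code of P. -/
theorem abelian_perfect_code_iff_sylow {G : Type*} [CommGroup G] [Fintype G]
    (P : Sylow 2 G) (H : Subgroup G) :
    IsSubgroupPerfectCode H ↔ IsSubgroupPerfectCode (H.subgroupOf P.toSubgroup) := by
  constructor
  · intro hc
    exact code_of_sq _ (sqG_to_sqP P H (sq_of_code H hc))
  · intro hc
    exact code_of_sq _ (sqP_to_sqG P H (sq_of_code _ hc))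
end

section
/- Let G be a finite cyclic group and H a subgroup of G. Then H is a perfect code of G (i.e., admits an inverse-closed left transversal containing the identity) if and only if |H| is odd or [G:H] is odd. -/
lemma perfectCode_of_transversal_exponents {G : Type*} [Group G] (H : Subgroup G)
    (g : G) (hg : ∀ x : G, x ∈ Subgroup.zpowers g) (n : ℤ)
    (hmem : ∀ k : ℤ, g ^ k ∈ H ↔ n ∣ k)
    (T : Set ℤ) (h0 : (0 : ℤ) ∈ T)
    (hex : ∀ a : ℤ, ∃ t ∈ T, n ∣ a - t)
    (huniq : ∀ t1 ∈ T, ∀ t2 ∈ T, n ∣ t1 - t2 → g ^ t1 = g ^ t2)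
    (hinv : ∀ t ∈ T, ∃ t' ∈ T, (g ^ t)⁻¹ = g ^ t') :
    IsSubgroupPerfectCode H := by
  refine ⟨(fun k : ℤ => g ^ k) '' T, ?_, ⟨0, h0, zpow_zero g⟩, ?_⟩
  · have key : ∀ x ∈ ((fun k : ℤ => g ^ k) '' T), x⁻¹ ∈ ((fun k : ℤ => g ^ k) '' T) := by
      rintro x ⟨t, ht, rfl⟩
      obtain ⟨t', ht', h'⟩ := hinv t ht
      exact ⟨t', ht', h'.symm⟩
    ext x
    constructor
    · intro hx
      rw [Set.mem_inv] at hx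
      simpa using key _ hx
    · intro hx
      rw [Set.mem_inv]
      simpa using key _ hx
  · rw [Subgroup.isComplement_iff_existsUnique]
    intro x
    obtain ⟨a, rfl⟩ := hg x
    obtain ⟨t, htT, hdvd⟩ := hex a
    refine ⟨⟨⟨g ^ t, ⟨t, htT, rfl⟩⟩, ⟨g ^ (a - t), (hmem _).2 hdvd⟩⟩, ?_, ?_⟩
    · show g ^ t * g ^ (a - t) = g ^ a
      rw [← zpow_add]
      ring_nf
    · rintro ⟨⟨l, hl⟩, ⟨h, hh⟩⟩ heq
      obtain ⟨t2, ht2T, rfl⟩ := hl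
      simp only at heq
      -- heq : g ^ t2 * h = g ^ a
      have hhval : h = g ^ (a - t2) := by
        have h1 : (g ^ t2)⁻¹ * g ^ a = h := by rw [← heq]; group
        rw [show a - t2 = -t2 + a by ring, zpow_add, zpow_neg, h1]
      have hmem2 : (n : ℤ) ∣ a - t2 := (hmem _).1 (by rw [← hhval]; exact hh)
      have hgt : g ^ t2 = g ^ t := huniq t2 ht2T t htT (by
        have := dvd_sub hdvd hmem2
        simpa using this)
      refine Prod.ext (Subtype.ext ?_) (Subtype.ext ?_)
      · exact hgt
      · show h = g ^ (a - t)
        rw [hhval, zpow_sub, zpow_sub, hgt]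

/-- A subgroup H of a finite cyclic group G is a perfect code of G iff |H| is odd or
[G:H] is odd. -/
theorem cyclic_subgroup_perfect_code_iff {G : Type*} [Group G] [Fintype G] [IsCyclic G]
    (H : Subgroup G) :
    IsSubgroupPerfectCode H ↔ (Odd (Nat.card H) ∨ Odd H.index) := by

  obtain ⟨g, hg⟩ := IsCyclic.exists_generator (α := G)
  have hcomm : ∀ x y : G, x * y = y * x := by
    intro x y
    obtain ⟨i, rfl⟩ := hg x
    obtain ⟨j, rfl⟩ := hg y
    exact zpow_mul_comm g i j
  haveI hHn : H.Normal := ⟨fun h hh x => by rw [hcomm x h, mul_assoc, mul_inv_cancel, mul_one]; exact hh⟩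
  have hNcard : Nat.card H * H.index = Nat.card G := Subgroup.card_mul_index H
  have horder : orderOf g = Nat.card G := orderOf_eq_card_of_forall_mem_zpowers hg
  have hnpos : 0 < H.index := Nat.pos_of_ne_zero Subgroup.index_ne_zero_of_finite
  have hmpos : 0 < Nat.card H := Nat.card_pos
  have hqgen : ∀ x : G ⧸ H, x ∈ Subgroup.zpowers ((g : G ⧸ H)) := by
    intro x
    obtain ⟨y, rfl⟩ := QuotientGroup.mk_surjective x
    obtain ⟨k, rfl⟩ := hg y
    exact ⟨k, (QuotientGroup.mk_zpow (N := H) g k).symm⟩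
  have hqord : orderOf ((g : G ⧸ H)) = H.index := by
    rw [orderOf_eq_card_of_forall_mem_zpowers hqgen, ← Subgroup.index_eq_card]
  have hmem : ∀ k : ℤ, g ^ k ∈ H ↔ ((H.index : ℤ)) ∣ k := by
    intro k
    rw [← QuotientGroup.eq_one_iff, QuotientGroup.mk_zpow (N := H), ← orderOf_dvd_iff_zpow_eq_one, hqord]
  constructor
  · rintro ⟨L, hLinv, hL1, hLc⟩
    by_contra hpar
    push_neg at hpar
    obtain ⟨he1, he2⟩ := hpar
    rw [Nat.not_odd_iff_even] at he1 he2
    obtain ⟨m2, hm2⟩ := he1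
    obtain ⟨n2, hn2⟩ := he2
    obtain ⟨⟨⟨l, hlL⟩, ⟨h, hh⟩⟩, hprod, -⟩ := hLc.existsUnique (g ^ (n2 : ℤ))
    simp only at hprod
    obtain ⟨a, hla⟩ := hg l
    simp only at hla
    have hh2 : h = g ^ ((n2 : ℤ) - a) := by
      have h1 : l⁻¹ * g ^ (n2 : ℤ) = h := by rw [← hprod]; group
      rw [show (n2 : ℤ) - a = -a + n2 by ring, zpow_add, zpow_neg, hla, h1]
    have hna : ((H.index : ℤ)) ∣ (n2 : ℤ) - a := (hmem _).1 (by rw [← hh2]; exact hh)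
    have hinvL : l⁻¹ ∈ L := by
      have : l⁻¹ ∈ L⁻¹ := by rw [Set.mem_inv]; simpa using hlL
      rwa [hLinv] at this
    have hIeq : (H.index : ℤ) = 2 * (n2 : ℤ) := by omega
    have hl2 : l⁻¹ * l⁻¹ ∈ H := by
      have hll2 : l⁻¹ * l⁻¹ = g ^ (-(2 * a)) := by rw [← hla]; group
      rw [hll2, hmem]
      obtain ⟨k, hk⟩ := hna
      exact ⟨2 * k - 1, by linear_combination 2 * hk + hIeq⟩
    have hpair := hLc.1 (a₁ := ⟨⟨l⁻¹, hinvL⟩, ⟨1, H.one_mem⟩⟩)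
      (a₂ := ⟨⟨l, hlL⟩, ⟨l⁻¹ * l⁻¹, hl2⟩⟩) (by show l⁻¹ * 1 = l * (l⁻¹ * l⁻¹); group)
    have hll : l⁻¹ = l := congrArg (fun p => (p.1 : G)) hpair
    have hg2a : g ^ (2 * a) = 1 := by
      have h2 : l * l = 1 := by nth_rewrite 2 [← hll]; group
      rw [two_mul, zpow_add, hla, h2]
    have hNdvd : ((Nat.card G : ℤ)) ∣ 2 * a := by
      rw [← horder]
      exact orderOf_dvd_iff_zpow_eq_one.mpr hg2a
    obtain ⟨u, hu⟩ := hNdvd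
    obtain ⟨k, hk⟩ := hna
    have hNeq : (Nat.card G : ℤ) = (2 * m2) * (2 * n2) := by
      rw [← hNcard]; push_cast [hm2, hn2]; ring
    have hn2pos : (0 : ℤ) < n2 := by omega
    have ha2 : 2 * a = 2 * (2 * (m2 : ℤ) * n2 * u) := by rw [hu, hNeq]; ring
    have ha : a = 2 * (m2 : ℤ) * n2 * u := by omega
    have hk' : (n2 : ℤ) - a = 2 * (n2 : ℤ) * k := by rw [hIeq] at hk; linarith
    have key : (n2 : ℤ) * (1 - 2 * (k + m2 * u)) = 0 := by linear_combination hk' + ha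
    rcases mul_eq_zero.mp key with h0 | h0
    · exact absurd h0 hn2pos.ne'
    · have : (2 : ℤ) ∣ 1 := ⟨k + (m2 : ℤ) * u, by linarith⟩
      norm_num at this
  · intro hpar
    by_cases hoddn : Odd H.index
    · obtain ⟨c, hc⟩ := hoddn
      apply perfectCode_of_transversal_exponents H g hg (H.index : ℤ) hmem
        (Set.Icc (-(c : ℤ)) c)
      · exact Set.mem_Icc.2 ⟨by omega, by omega⟩
      · intro a
        have h1 : 0 ≤ (a + c) % (H.index : ℤ) :=
          Int.emod_nonneg _ (by exact_mod_cast hnpos.ne')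
        have h2 : (a + c) % (H.index : ℤ) < (H.index : ℤ) :=
          Int.emod_lt_of_pos _ (by exact_mod_cast hnpos)
        refine ⟨(a + c) % (H.index : ℤ) - c, Set.mem_Icc.2 ⟨by omega, by omega⟩,
          ⟨(a + c) / (H.index : ℤ), by linarith [Int.mul_ediv_add_emod (a + c) ((H.index : ℤ))]⟩⟩
      · intro t1 ht1 t2 ht2 hd
        rw [Set.mem_Icc] at ht1 ht2
        have h0 : t1 - t2 = 0 :=
          Int.eq_zero_of_abs_lt_dvd hd (by rw [abs_lt]; constructor <;> omega)
        rw [sub_eq_zero.mp h0]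
      · intro t ht
        rw [Set.mem_Icc] at ht
        exact ⟨-t, Set.mem_Icc.2 ⟨by omega, by omega⟩, (zpow_neg g t).symm⟩
    · have hoddm : Odd (Nat.card H) := hpar.resolve_right hoddn
      rw [Nat.not_odd_iff_even] at hoddn
      obtain ⟨c, hc⟩ := hoddn
      obtain ⟨d, hd⟩ := hoddm
      have hcpos : 0 < c := by omega
      have hI : (H.index : ℤ) = 2 * (c : ℤ) := by omega
      have hM : ((Nat.card H : ℤ)) = 2 * (d : ℤ) + 1 := by omega
      have haux : ∀ t : ℤ, -(c : ℤ) < t → t < c → ¬ ((H.index : ℤ) ∣ t - (Nat.card H : ℤ) * c) := by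
        intro t htl htr hdvd
        obtain ⟨k, hk⟩ := hdvd
        rw [hI, hM] at hk
        -- t - (2d+1)c = 2c k  =>  t = c + 2c(k+d)
        have ht' : t = (c : ℤ) + 2 * (c : ℤ) * (k + d) := by linear_combination hk
        have h2c : (0 : ℤ) < 2 * (c : ℤ) := by omega
        rcases lt_trichotomy (k + (d : ℤ)) 0 with hK | hK | hK
        · have hK1 : k + (d : ℤ) ≤ -1 := by omega
          nlinarith
        · rw [hK, mul_zero, add_zero] at ht'
          omega
        · have hK1 : 1 ≤ k + (d : ℤ) := hK
          nlinarith
      apply perfectCode_of_transversal_exponents H g hg (H.index : ℤ) hmem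
        (Set.Ioo (-(c : ℤ)) c ∪ {(Nat.card H : ℤ) * c})
      · exact Or.inl (Set.mem_Ioo.2 ⟨by omega, by omega⟩)
      · intro a
        set r := (a + ((c : ℤ) - 1)) % (H.index : ℤ) with hr
        have h1 : 0 ≤ r := Int.emod_nonneg _ (by exact_mod_cast hnpos.ne')
        have h2 : r < (H.index : ℤ) := Int.emod_lt_of_pos _ (by exact_mod_cast hnpos)
        have hdiv : (H.index : ℤ) ∣ a - (r - ((c : ℤ) - 1)) :=
          ⟨(a + ((c : ℤ) - 1)) / (H.index : ℤ), by
            linarith [Int.mul_ediv_add_emod (a + ((c : ℤ) - 1)) ((H.index : ℤ))]⟩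
        by_cases hcase : r = 2 * (c : ℤ) - 1
        · refine ⟨(Nat.card H : ℤ) * c, Or.inr rfl, ?_⟩
          obtain ⟨q, hq⟩ := hdiv
          rw [hcase] at hq
          exact ⟨q - d, by linear_combination hq - (c : ℤ) * hM + (d : ℤ) * hI⟩
        · exact ⟨r - ((c : ℤ) - 1), Or.inl (Set.mem_Ioo.2 ⟨by omega, by omega⟩), hdiv⟩
      · intro t1 ht1 t2 ht2 hdvd
        rcases ht1 with h1 | h1 <;> rcases ht2 with h2 | h2
        · rw [Set.mem_Ioo] at h1 h2
          have h0 : t1 - t2 = 0 :=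
            Int.eq_zero_of_abs_lt_dvd hdvd (by rw [abs_lt]; constructor <;> omega)
          rw [sub_eq_zero.mp h0]
        · rw [Set.mem_Ioo] at h1
          rw [Set.mem_singleton_iff] at h2
          exact absurd (h2 ▸ hdvd) (haux t1 h1.1 h1.2)
        · rw [Set.mem_Ioo] at h2
          rw [Set.mem_singleton_iff] at h1
          have hneg : (H.index : ℤ) ∣ t2 - (Nat.card H : ℤ) * c := by
            have h3 := dvd_neg.mpr hdvd
            rw [neg_sub, h1] at h3
            exact h3
          exact absurd hneg (haux t2 h2.1 h2.2)
        · rw [Set.mem_singleton_iff] at h1 h2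
          rw [h1, h2]
      · intro t ht
        rcases ht with h1 | h1
        · rw [Set.mem_Ioo] at h1
          exact ⟨-t, Or.inl (Set.mem_Ioo.2 ⟨by omega, by omega⟩), (zpow_neg g t).symm⟩
        · rw [Set.mem_singleton_iff] at h1
          refine ⟨t, Or.inr (by rw [h1]; rfl), ?_⟩
          have h2t : g ^ (t + t) = 1 := by
            rw [h1]
            refine orderOf_dvd_iff_zpow_eq_one.mp ⟨1, ?_⟩
            rw [horder, ← hNcard]
            push_cast [hc]
            ring
          have hmul : g ^ t * g ^ t = 1 := by rw [← zpow_add, h2t]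
          exact inv_eq_of_mul_eq_one_right hmul
end

section
/- Let D_{2n} = ⟨a, b | aⁿ = b² = (ab)² = e⟩ be the dihedral group of order 2n (n ≥ 3), and let H = ⟨a^t⟩ where t divides n. Then H is a perfect code of D_{2n} if and only if t is odd or n/t is odd. -/
namespace PerfectCodeAux

open DihedralGroup

lemma r_pow {n : ℕ} (a : ZMod n) (k : ℕ) : (r a) ^ k = r ((k : ZMod n) * a) := by
  induction k with
  | zero => simp
  | succ k ih =>
      rw [pow_succ, ih, r_mul_r]
      congr 1
      push_cast
      ring

lemma r_zpow {n : ℕ} (a : ZMod n) (k : ℤ) : (r a) ^ k = r ((k : ZMod n) * a) := by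
  cases k with
  | ofNat k => simpa using r_pow a k
  | negSucc k =>
      rw [zpow_negSucc, r_pow]
      show _⁻¹ = _
      have : ((r (((k + 1 : ℕ) : ZMod n) * a)))⁻¹ = r (-(((k + 1 : ℕ) : ZMod n) * a)) := rfl
      rw [this]
      congr 1
      push_cast
      ring

lemma mem_zpowers_r_iff {n t : ℕ} [NeZero n] [NeZero t] (ht : t ∣ n) (x : DihedralGroup n) :
    x ∈ Subgroup.zpowers (r (t : ZMod n)) ↔
      ∃ y : ZMod n, ZMod.castHom ht (ZMod t) y = 0 ∧ x = r y := by
  constructor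
  · rw [Subgroup.mem_zpowers_iff]
    rintro ⟨k, rfl⟩
    refine ⟨(k : ZMod n) * (t : ZMod n), ?_, (r_zpow _ k)⟩
    simp [map_mul, ZMod.natCast_self]
  · rintro ⟨y, hy, rfl⟩
    have hy' : ((y.val : ℕ) : ZMod t) = 0 := by
      have := ZMod.natCast_zmod_val y
      calc ((y.val : ℕ) : ZMod t) = ZMod.castHom ht (ZMod t) ((y.val : ℕ) : ZMod n) := by
            simp [map_natCast]
        _ = 0 := by rw [this, hy]
    rw [ZMod.natCast_eq_zero_iff] at hy'
    obtain ⟨c, hc⟩ := hy'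
    rw [Subgroup.mem_zpowers_iff]
    refine ⟨(c : ℤ), ?_⟩
    rw [r_zpow]
    congr 1
    rw [← ZMod.natCast_zmod_val y, hc]
    push_cast
    ring

lemma code_of_section {n t : ℕ} [NeZero n] [NeZero t] (ht : t ∣ n) (f : ZMod t → ZMod n)
    (hsec : ∀ i, ZMod.castHom ht (ZMod t) (f i) = i) (h0 : f 0 = 0)
    (hneg : ∀ i, f (-i) = - f i) :
    IsSubgroupPerfectCode (Subgroup.zpowers (r ((t : ℕ) : ZMod n))) := by
  refine ⟨{x | ∃ i, x = r (f i) ∨ x = sr (f i)}, ?_, ⟨0, Or.inl (by rw [h0]; rfl)⟩, ?_⟩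
  · ext x
    simp only [Set.mem_inv, Set.mem_setOf_eq]
    rcases x with j | j
    · have hinvr : (r j : DihedralGroup n)⁻¹ = r (-j) := rfl
      rw [hinvr]
      constructor
      · rintro ⟨i, h | h⟩
        · refine ⟨-i, Or.inl ?_⟩
          rw [hneg]
          have : -j = f i := by injection h
          rw [← this]; simp
        · exact absurd h (by simp)
      · rintro ⟨i, h | h⟩
        · refine ⟨-i, Or.inl ?_⟩
          rw [hneg]
          have : j = f i := by injection h
          rw [this]
        · exact absurd h (by simp)
    · have hinvs : (sr j : DihedralGroup n)⁻¹ = sr j := rfl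
      rw [hinvs]
  · rw [Subgroup.isComplement_iff_existsUnique]
    intro g
    rcases g with j | j
    · refine ⟨⟨⟨r (f (ZMod.castHom ht (ZMod t) j)), ⟨_, Or.inl rfl⟩⟩,
        ⟨r (j - f (ZMod.castHom ht (ZMod t) j)),
          (mem_zpowers_r_iff ht _).mpr ⟨_, by rw [map_sub, hsec, sub_self], rfl⟩⟩⟩, ?_, ?_⟩
      · show r _ * r _ = r j
        rw [r_mul_r]
        congr 1
        ring
      · rintro ⟨⟨l, hl⟩, ⟨h, hh⟩⟩ heq
        obtain ⟨i1, hl1 | hl1⟩ := hl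
        · obtain ⟨y, hy0, rfl⟩ := (mem_zpowers_r_iff ht h).mp hh
          subst hl1
          simp only at heq
          rw [r_mul_r] at heq
          have hsum : f i1 + y = j := by injection heq
          have hi1 : i1 = ZMod.castHom ht (ZMod t) j := by
            have := congrArg (ZMod.castHom ht (ZMod t)) hsum
            rw [map_add, hsec, hy0, add_zero] at this
            exact this
          subst hi1
          have hy : y = j - f (ZMod.castHom ht (ZMod t) j) := by
            rw [eq_sub_iff_add_eq, add_comm]; exact hsum
          subst hy
          rfl
        · obtain ⟨y, hy0, rfl⟩ := (mem_zpowers_r_iff ht h).mp hh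
          subst hl1
          simp only at heq
          rw [sr_mul_r] at heq
          exact absurd heq (by simp)
    · refine ⟨⟨⟨sr (f (ZMod.castHom ht (ZMod t) j)), ⟨_, Or.inr rfl⟩⟩,
        ⟨r (j - f (ZMod.castHom ht (ZMod t) j)),
          (mem_zpowers_r_iff ht _).mpr ⟨_, by rw [map_sub, hsec, sub_self], rfl⟩⟩⟩, ?_, ?_⟩
      · show sr _ * r _ = sr j
        rw [sr_mul_r]
        congr 1
        ring
      · rintro ⟨⟨l, hl⟩, ⟨h, hh⟩⟩ heq
        obtain ⟨i1, hl1 | hl1⟩ := hl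
        · obtain ⟨y, hy0, rfl⟩ := (mem_zpowers_r_iff ht h).mp hh
          subst hl1
          simp only at heq
          rw [r_mul_r] at heq
          exact absurd heq (by simp)
        · obtain ⟨y, hy0, rfl⟩ := (mem_zpowers_r_iff ht h).mp hh
          subst hl1
          simp only at heq
          rw [sr_mul_r] at heq
          have hsum : f i1 + y = j := by injection heq
          have hi1 : i1 = ZMod.castHom ht (ZMod t) j := by
            have := congrArg (ZMod.castHom ht (ZMod t)) hsum
            rw [map_add, hsec, hy0, add_zero] at this
            exact this
          subst hi1
          have hy : y = j - f (ZMod.castHom ht (ZMod t) j) := by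
            rw [eq_sub_iff_add_eq, add_comm]; exact hsum
          subst hy
          rfl

end PerfectCodeAux

/-- In the dihedral group of order 2n (n ≥ 3), the subgroup ⟨a^t⟩ with t ∣ n is a perfect
code iff t is odd or n / t is odd. -/
theorem dihedral_rotation_subgroup_perfect_code_iff (n t : ℕ) (hn : 3 ≤ n) (ht : t ∣ n) :
    IsSubgroupPerfectCode (Subgroup.zpowers (DihedralGroup.r (t : ZMod n))) ↔
      (Odd t ∨ Odd (n / t)) := by
  haveI : NeZero n := ⟨by omega⟩
  have ht0 : t ≠ 0 := by
    rintro rfl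
    have := Nat.eq_zero_of_zero_dvd ht
    omega
  haveI : NeZero t := ⟨ht0⟩
  have hnm : t * (n / t) = n := Nat.mul_div_cancel' ht
  constructor
  · rintro ⟨L, hinv, hone, hcomp⟩
    by_contra hodd
    push_neg at hodd
    obtain ⟨het, hem⟩ := hodd
    rw [Nat.not_odd_iff_even] at het hem
    have h2t : 2 * (t / 2) = t := by
      obtain ⟨s, hs⟩ := het; omega
    obtain ⟨⟨⟨l, hl⟩, ⟨h, hh⟩⟩, hprod, -⟩ :=
      Subgroup.isComplement_iff_existsUnique.mp hcomp (DihedralGroup.r ((t / 2 : ℕ) : ZMod n))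
    have hprod' : l * h = DihedralGroup.r ((t / 2 : ℕ) : ZMod n) := hprod
    rw [SetLike.mem_coe, Subgroup.mem_zpowers_iff] at hh
    obtain ⟨k, rfl⟩ := hh
    rw [PerfectCodeAux.r_zpow] at hprod'
    have h2t' : 2 * ((t / 2 : ℕ) : ZMod n) = ((t : ℕ) : ZMod n) := by
      have := congrArg (Nat.cast : ℕ → ZMod n) h2t
      push_cast at this
      exact this
    rcases l with c | c
    swap
    · rw [DihedralGroup.sr_mul_r] at hprod'
      exact absurd hprod' (by simp)
    rw [DihedralGroup.r_mul_r] at hprod'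
    have hc : c + (k : ZMod n) * ((t : ℕ) : ZMod n) = ((t / 2 : ℕ) : ZMod n) := by
      injection hprod'
    have h2mem : DihedralGroup.r (-c - c) ∈
        Subgroup.zpowers (DihedralGroup.r ((t : ℕ) : ZMod n)) := by
      rw [Subgroup.mem_zpowers_iff]
      refine ⟨2 * k - 1, ?_⟩
      rw [PerfectCodeAux.r_zpow]
      congr 1
      push_cast
      linear_combination 2 * hc + h2t'
    have hlinv : (DihedralGroup.r c)⁻¹ ∈ L := by
      rw [← hinv]; exact Set.inv_mem_inv.mpr hl
    have hrc : (DihedralGroup.r c : DihedralGroup n)⁻¹ = DihedralGroup.r (-c) := rfl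
    obtain ⟨x, -, hu⟩ :=
      Subgroup.isComplement_iff_existsUnique.mp hcomp (DihedralGroup.r (-c))
    have e1 := hu ⟨⟨DihedralGroup.r (-c), hrc ▸ hlinv⟩, ⟨1, Subgroup.one_mem _⟩⟩ (mul_one _)
    have e2 := hu ⟨⟨DihedralGroup.r c, hl⟩, ⟨DihedralGroup.r (-c - c), h2mem⟩⟩ (by
      show DihedralGroup.r c * DihedralGroup.r (-c - c) = _
      rw [DihedralGroup.r_mul_r]; congr 1; ring)
    have e3 : DihedralGroup.r (-c) = DihedralGroup.r c :=
      congrArg (fun p => (p.1 : DihedralGroup n)) (e1.trans e2.symm)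
    have hcc : -c = c := by injection e3
    have hzero : ((t * (1 - 2 * k) : ℤ) : ZMod n) = 0 := by
      push_cast
      linear_combination -hcc - 2 * hc - h2t'
    rw [ZMod.intCast_zmod_eq_zero_iff_dvd] at hzero
    obtain ⟨j, hj⟩ := hzero
    obtain ⟨u, hu2⟩ := hem
    have hn' : (n : ℤ) = t * (2 * u) := by
      rw [← hnm, hu2]; push_cast; ring
    rw [hn'] at hj
    have hcancel : (1 : ℤ) - 2 * k = 2 * u * j := by
      have := hj
      rw [mul_assoc] at this
      exact mul_left_cancel₀ (by exact_mod_cast ht0) this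
    have : (2 : ℤ) * (u * j) = 1 - 2 * k := by linear_combination -hcancel
    omega
  · intro hcase
    refine PerfectCodeAux.code_of_section ht
      (fun i => if 2 * i.val = t then ((n / 2 : ℕ) : ZMod n) else ((i.valMinAbs : ℤ) : ZMod n))
      ?_ ?_ ?_
    · intro i
      by_cases h : 2 * i.val = t
      · rw [if_pos h]
        have hm : Odd (n / t) := hcase.resolve_left (by rw [Nat.odd_iff]; omega)
        obtain ⟨j, hj⟩ := hm
        have h1 : n = 2 * (t * j) + t := by rw [← hnm, hj]; ring
        have hn2 : n / 2 = t * j + i.val := by omega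
        rw [map_natCast, hn2]
        push_cast
        simp [ZMod.natCast_self, ZMod.natCast_zmod_val]
      · rw [if_neg h, map_intCast, ZMod.coe_valMinAbs]
    · have hv : (0 : ZMod t).val = 0 := ZMod.val_zero
      rw [if_neg (by rw [hv]; omega)]
      simp
    · intro i
      by_cases h : 2 * i.val = t
      · have hi0 : i ≠ 0 := by
          intro h0
          rw [h0, ZMod.val_zero] at h
          omega
        have hnegval : (-i).val = t - i.val := by rw [ZMod.neg_val, if_neg hi0]
        have h' : 2 * (-i).val = t := by
          have := i.val_lt; omega
        rw [if_pos h, if_pos h']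
        obtain ⟨v, hv⟩ : ∃ v, i.val = v := ⟨_, rfl⟩
        have hv2 : 2 * v = t := by rw [← hv]; exact h
        have hne : 2 * (v * (n / t)) = n := by
          calc 2 * (v * (n / t)) = (2 * v) * (n / t) := by ring
            _ = t * (n / t) := by rw [hv2]
            _ = n := hnm
        have hsum : n / 2 + n / 2 = n := by omega
        have hzero : ((n / 2 : ℕ) : ZMod n) + ((n / 2 : ℕ) : ZMod n) = 0 := by
          rw [← Nat.cast_add, hsum, ZMod.natCast_self]
        exact eq_neg_of_add_eq_zero_left hzero
      · have h'' : ¬ (2 * (-i).val = t) := by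
          by_cases hi0 : i = 0
          · rw [hi0, neg_zero, ZMod.val_zero]; omega
          · rw [ZMod.neg_val, if_neg hi0]
            have := i.val_lt
            omega
        rw [if_neg h, if_neg h'', ZMod.valMinAbs_neg_of_ne_half h]
        push_cast
        ring
end

section
/- Let D_{2n} = ⟨a, b | aⁿ = b² = (ab)² = e⟩ with n ≥ 3, and let H = ⟨a^t⟩ with t dividing n. Then H is a total perfect code of D_{2n} if and only if t is odd and n/t is even. -/
namespace TPCAux
open DihedralGroup Subgroup

variable {n : ℕ}

@[simp] lemma r_inv (a : ZMod n) : (r a)⁻¹ = r (-a) := rfl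
@[simp] lemma sr_inv (a : ZMod n) : (sr a)⁻¹ = sr a := rfl

lemma r_pow (a : ZMod n) (k : ℕ) : (r a) ^ k = r ((k : ZMod n) * a) := by
  induction k with
  | zero => simp [-r_zero, one_def]
  | succ k ih =>
      rw [pow_succ, ih, r_mul_r]
      congr 1
      push_cast
      ring

lemma r_zpow (a : ZMod n) (k : ℤ) : (r a) ^ k = r ((k : ZMod n) * a) := by
  cases k with
  | ofNat k =>
      rw [Int.ofNat_eq_coe, zpow_natCast, r_pow]
      norm_cast
  | negSucc k =>
      rw [zpow_negSucc, r_pow, r_inv]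
      congr 1
      push_cast
      ring

lemma castHom_eq_zero_iff [NeZero n] {t : ℕ} (ht : t ∣ n) (j : ZMod n) :
    ZMod.castHom ht (ZMod t) j = 0 ↔ t ∣ j.val := by
  rw [ZMod.castHom_apply, ← ZMod.natCast_val, ZMod.natCast_eq_zero_iff]

lemma mem_zpowers_r_iff [NeZero n] {t : ℕ} (ht : t ∣ n) (x : DihedralGroup n) :
    x ∈ zpowers (r (t : ZMod n)) ↔
      ∃ j : ZMod n, x = r j ∧ ZMod.castHom ht (ZMod t) j = 0 := by
  constructor
  · rintro ⟨k, rfl⟩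
    refine ⟨(k : ZMod n) * (t : ZMod n), (r_zpow _ _), ?_⟩
    rw [map_mul, map_natCast, ZMod.natCast_self, mul_zero]
  · rintro ⟨j, rfl, hj⟩
    rw [castHom_eq_zero_iff] at hj
    obtain ⟨k, hk⟩ := hj
    refine ⟨(k : ℤ), ?_⟩
    show r (t : ZMod n) ^ (k : ℤ) = r j
    rw [r_zpow]
    congr 1
    rw [← ZMod.natCast_zmod_val j, hk]
    push_cast
    ring

lemma sr_not_mem_zpowers_r [NeZero n] {t : ℕ} (ht : t ∣ n) (a : ZMod n) :
    sr a ∉ zpowers (r (t : ZMod n)) := by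
  rw [mem_zpowers_r_iff ht]
  rintro ⟨j, h, -⟩
  exact absurd h (by simp)

lemma r_mem_zpowers_r_iff [NeZero n] {t : ℕ} (ht : t ∣ n) (j : ZMod n) :
    r j ∈ zpowers (r (t : ZMod n)) ↔ ZMod.castHom ht (ZMod t) j = 0 := by
  rw [mem_zpowers_r_iff ht]
  constructor
  · rintro ⟨j', hj, h⟩
    obtain rfl : j = j' := by injection hj
    exact h
  · exact fun h => ⟨j, rfl, h⟩

end TPCAux

namespace TPCAux2
open DihedralGroup Subgroup TPCAux

lemma key {n : ℕ} [NeZero n] {t : ℕ} [NeZero t] (ht : t ∣ n) {S : Set (DihedralGroup n)}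
    (hinv : S⁻¹ = S) (h1 : (1 : DihedralGroup n) ∉ S)
    (hcomp : Subgroup.IsComplement S ((Subgroup.zpowers (r (t : ZMod n)) : Subgroup _) : Set _))
    (c : ZMod t) (hc : -c = c) :
    ∃ k : ZMod n, k ≠ 0 ∧ k + k = 0 ∧ ZMod.castHom ht (ZMod t) k = c := by
  have htr : Subgroup.IsComplement S
      ((Subgroup.zpowers (r (t : ZMod n)) : Subgroup _) : Set _) := hcomp
  rw [Subgroup.isComplement_iff_existsUnique_inv_mul_mem] at htr
  obtain ⟨⟨s, hsS⟩, hs, -⟩ := htr (r ((c.val : ZMod n)))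
  simp only [SetLike.mem_coe] at hs
  match s, hsS, hs with
  | sr a, hsS, hs =>
      exfalso
      simp only [sr_inv, sr_mul_r] at hs
      exact sr_not_mem_zpowers_r ht _ hs
  | r k, hsS, hs =>
      simp only [r_inv, r_mul_r] at hs
      rw [r_mem_zpowers_r_iff ht] at hs
      have hφk : ZMod.castHom ht (ZMod t) k = c := by
        have := hs
        rw [map_add, map_neg, map_natCast, ZMod.natCast_zmod_val] at this
        linear_combination -this
      refine ⟨k, ?_, ?_, hφk⟩
      · rintro rfl
        exact h1 (by simpa [-r_zero, one_def] using hsS)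
      · obtain ⟨⟨s₂, hs₂S⟩, -, huniq⟩ := htr (r k)
        have hAmem : (r k)⁻¹ * r k ∈ ((zpowers (r (t : ZMod n)) : Subgroup _) : Set _) := by
          simp only [inv_mul_cancel, SetLike.mem_coe]
          exact one_mem _
        have hBS : (r k)⁻¹ ∈ S := by rw [← hinv]; exact Set.inv_mem_inv.mpr hsS
        have hBmem : ((r k)⁻¹)⁻¹ * r k ∈ ((zpowers (r (t : ZMod n)) : Subgroup _) : Set _) := by
          simp only [inv_inv, r_mul_r, SetLike.mem_coe]
          rw [r_mem_zpowers_r_iff ht, map_add, hφk]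
          linear_combination -hc
        have hA := huniq ⟨r k, hsS⟩ hAmem
        have hB := huniq ⟨(r k)⁻¹, hBS⟩ hBmem
        have : (r k : DihedralGroup n)⁻¹ = r k := by
          have := hB.trans hA.symm
          exact congrArg Subtype.val this
        rw [r_inv] at this
        injection this with h'
        linear_combination -h'

end TPCAux2

namespace TPCAux3
open DihedralGroup Subgroup TPCAux

lemma neg_natCast_eq {n a b : ℕ} (h : a + b = n) : -((a : ZMod n)) = (b : ZMod n) := by
  rw [neg_eq_iff_add_eq_zero, ← Nat.cast_add, h, ZMod.natCast_self]

lemma natCast_ne_zero {n a : ℕ} (h0 : 0 < a) (hlt : a < n) : (a : ZMod n) ≠ 0 := by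
  rw [ne_eq, ZMod.natCast_eq_zero_iff]
  intro hd
  have := Nat.le_of_dvd h0 hd
  omega

lemma half_val {n : ℕ} [NeZero n] {k : ZMod n} (hk0 : k ≠ 0) (hkk : k + k = 0) :
    k.val + k.val = n := by
  have h : ((k.val + k.val : ℕ) : ZMod n) = 0 := by
    push_cast [ZMod.natCast_zmod_val]
    exact hkk
  rw [ZMod.natCast_eq_zero_iff] at h
  have h1 : k.val < n := k.val_lt
  have h2 : k.val ≠ 0 := fun hh => hk0 ((ZMod.val_eq_zero k).mp hh)
  obtain ⟨c, hc⟩ := h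
  rcases Nat.lt_or_ge c 2 with hcl | hcl
  · interval_cases c <;> omega
  · nlinarith [Nat.le_of_eq hc]

lemma construct {n t : ℕ} [NeZero n] [NeZero t] (ht : t ∣ n)
    (htodd : Odd t) (hmeven : Even (n / t)) (hn3 : 3 ≤ n) :
    ∃ S : Set (DihedralGroup n), S⁻¹ = S ∧ (1 : DihedralGroup n) ∉ S ∧
      Subgroup.IsComplement S
        ((Subgroup.zpowers (r (t : ZMod n)) : Subgroup _) : Set _) := by
  have ht0 : 0 < t := Nat.pos_of_ne_zero (NeZero.ne t)
  have htn : t ≤ n := Nat.le_of_dvd (by omega) ht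
  obtain ⟨u, hu⟩ : ∃ u, n = 2 * (t * u) := by
    obtain ⟨w, hw⟩ := hmeven
    obtain ⟨m, hm⟩ := ht
    refine ⟨w, ?_⟩
    have hmw : m = w + w := by rw [hm, Nat.mul_div_cancel_left _ ht0] at hw; exact hw
    rw [hm, hmw]; ring
  set φ := ZMod.castHom ht (ZMod t) with hφdef
  set ρ : ZMod t → ZMod n := fun i =>
    if i = 0 then ((n / 2 : ℕ) : ZMod n)
    else if 2 * i.val < t then ((i.val : ℕ) : ZMod n)
    else ((n - t + i.val : ℕ) : ZMod n) with hρdef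
  have hvpos : ∀ i : ZMod t, i ≠ 0 → 0 < i.val := by
    intro i hi
    exact Nat.pos_of_ne_zero fun hh => hi ((ZMod.val_eq_zero i).mp hh)
  have hρφ : ∀ i, φ (ρ i) = i := by
    intro i
    by_cases hi : i = 0
    · subst hi
      simp only [hρdef, if_pos rfl]
      rw [map_natCast]
      exact (ZMod.natCast_eq_zero_iff _ _).mpr ⟨u, by omega⟩
    · have hvi := hvpos i hi
      have hvt : i.val < t := i.val_lt
      simp only [hρdef, if_neg hi]
      split
      · rw [map_natCast, ZMod.natCast_zmod_val]
      · rw [map_natCast]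
        have : ((n - t + i.val : ℕ) : ZMod t) = (i.val : ZMod t) := by
          have h1 : (((n - t : ℕ) : ℕ) : ZMod t) = 0 := by
            rw [ZMod.natCast_eq_zero_iff]
            exact (Nat.dvd_sub ht dvd_rfl)
          rw [Nat.cast_add, h1, zero_add]
        rw [this, ZMod.natCast_zmod_val]
  have hρ0 : ∀ i, ρ i ≠ 0 := by
    intro i
    by_cases hi : i = 0
    · subst hi
      simp only [hρdef, if_pos rfl]
      exact natCast_ne_zero (by omega) (by omega)
    · have hvi := hvpos i hi
      have hvt : i.val < t := i.val_lt
      simp only [hρdef, if_neg hi]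
      split
      · exact natCast_ne_zero hvi (by omega)
      · exact natCast_ne_zero (by omega) (by omega)
  have hρneg : ∀ i, -(ρ i) = ρ (-i) := by
    intro i
    by_cases hi : i = 0
    · subst hi
      rw [neg_zero]
      simp only [hρdef, if_pos rfl]
      exact neg_natCast_eq (by omega)
    · have hvi := hvpos i hi
      have hvt : i.val < t := i.val_lt
      have hni : -i ≠ 0 := by simpa using hi
      have hnval : (-i).val = t - i.val := by rw [ZMod.neg_val, if_neg hi]
      have hne : 2 * i.val ≠ t := by
        intro hh
        exact (Nat.not_even_iff_odd.mpr htodd) ⟨i.val, by omega⟩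
      simp only [hρdef, if_neg hi, if_neg hni, hnval]
      rcases Nat.lt_or_ge (2 * i.val) t with hlt | hge
      · rw [if_pos hlt, if_neg (by omega)]
        exact neg_natCast_eq (by omega)
      · rw [if_neg (by omega), if_pos (by omega)]
        exact neg_natCast_eq (by omega)
  set σ : ZMod t → ZMod n := fun i => ((i.val : ℕ) : ZMod n) with hσdef
  have hσφ : ∀ i, φ (σ i) = i := by
    intro i
    simp only [hσdef, map_natCast, ZMod.natCast_zmod_val]
  refine ⟨Set.range (fun i => r (ρ i)) ∪ Set.range (fun i => sr (σ i)), ?_, ?_, ?_⟩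
  · have hcl : ∀ x ∈ Set.range (fun i => r (ρ i)) ∪ Set.range (fun i => sr (σ i)),
        x⁻¹ ∈ Set.range (fun i => r (ρ i)) ∪ Set.range (fun i => sr (σ i)) := by
      rintro x (⟨i, rfl⟩ | ⟨i, rfl⟩)
      · exact Or.inl ⟨-i, by simp only [r_inv, hρneg]⟩
      · exact Or.inr ⟨i, by simp only [sr_inv]⟩
    ext x
    rw [Set.mem_inv]
    constructor
    · intro h
      simpa using hcl _ h
    · intro h
      exact hcl x h
  · rintro (⟨i, hi⟩ | ⟨i, hi⟩)
    · rw [one_def] at hi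
      injection hi with h'
      exact hρ0 i h'
    · rw [one_def] at hi
      exact absurd hi (by simp [-r_zero])
  · show Subgroup.IsComplement _ _
    rw [Subgroup.isComplement_iff_existsUnique_inv_mul_mem]
    intro g
    match g with
    | r j =>
        refine ⟨⟨r (ρ (φ j)), Or.inl ⟨φ j, rfl⟩⟩, ?_, ?_⟩
        · simp only [r_inv, r_mul_r, SetLike.mem_coe]
          rw [r_mem_zpowers_r_iff ht, map_add, map_neg, hρφ]
          ring
        · rintro ⟨s, (⟨i, rfl⟩ | ⟨i, rfl⟩)⟩ hmem
        
          · simp only [r_inv, r_mul_r, SetLike.mem_coe] at hmem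
            rw [r_mem_zpowers_r_iff ht, map_add, map_neg, hρφ] at hmem
            have : i = φ j := by linear_combination -hmem
            exact Subtype.ext (by rw [this])
          · exfalso
            simp only [sr_inv, sr_mul_r, SetLike.mem_coe] at hmem
            exact sr_not_mem_zpowers_r ht _ hmem
    | sr j =>
        refine ⟨⟨sr (σ (φ j)), Or.inr ⟨φ j, rfl⟩⟩, ?_, ?_⟩
        · simp only [sr_inv, sr_mul_sr, SetLike.mem_coe]
          rw [r_mem_zpowers_r_iff ht, map_sub, hσφ]
          ring
        · rintro ⟨s, (⟨i, rfl⟩ | ⟨i, rfl⟩)⟩ hmem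
          · exfalso
            simp only [r_inv, r_mul_sr, SetLike.mem_coe] at hmem
            exact sr_not_mem_zpowers_r ht _ hmem
          · simp only [sr_inv, sr_mul_sr, SetLike.mem_coe] at hmem
            rw [r_mem_zpowers_r_iff ht, map_sub, hσφ] at hmem
            have : i = φ j := by linear_combination -hmem
            exact Subtype.ext (by rw [this])

end TPCAux3

/-- In the dihedral group of order 2n (n ≥ 3), the subgroup ⟨a^t⟩ with t ∣ n is a total
perfect code iff t is odd and n / t is even. -/
theorem dihedral_rotation_subgroup_total_perfect_code_iff (n t : ℕ) (hn : 3 ≤ n)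
    (ht : t ∣ n) :
    IsSubgroupTotalPerfectCode (Subgroup.zpowers (DihedralGroup.r (t : ZMod n))) ↔
      (Odd t ∧ Even (n / t)) := by
  haveI : NeZero n := ⟨by omega⟩
  have ht0 : t ≠ 0 := by
    rintro rfl
    rw [Nat.eq_zero_of_zero_dvd ht] at hn
    omega
  haveI : NeZero t := ⟨ht0⟩
  constructor
  · rintro ⟨S, hinv, h1, hcomp⟩
    obtain ⟨k, hk0, hkk, hkφ⟩ := TPCAux2.key ht hinv h1 hcomp 0 neg_zero
    have hkval : k.val + k.val = n := TPCAux3.half_val hk0 hkk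
    have htk : t ∣ k.val := (TPCAux.castHom_eq_zero_iff ht k).mp hkφ
    constructor
    · by_contra hodd
      rw [Nat.not_odd_iff_even] at hodd
      obtain ⟨v, hv⟩ := hodd
      have hv1 : 0 < v := by omega
      have hcneg : -((v : ZMod t)) = (v : ZMod t) :=
        TPCAux3.neg_natCast_eq (by omega)
      obtain ⟨k', hk'0, hk'k, hk'φ⟩ := TPCAux2.key ht hinv h1 hcomp (v : ZMod t) hcneg
      have hk'val : k'.val + k'.val = n := TPCAux3.half_val hk'0 hk'k
      have hkk' : k' = k := by
        rw [← ZMod.natCast_zmod_val k', ← ZMod.natCast_zmod_val k]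
        congr 1
        omega
      rw [hkk', hkφ] at hk'φ
      exact TPCAux3.natCast_ne_zero hv1 (by omega) hk'φ.symm
    · obtain ⟨u, hu⟩ := htk
      obtain ⟨m, hm⟩ := ht
      refine ⟨u, ?_⟩
      have htpos : 0 < t := by omega
      have hmn : n / t = m := by rw [hm, Nat.mul_div_cancel_left _ htpos]
      have h2 : t * m = t * (u + u) := by rw [Nat.mul_add, ← hu]; omega
      rw [hmn]
      exact Nat.eq_of_mul_eq_mul_left htpos h2
  · rintro ⟨hodd, heven⟩
    exact TPCAux3.construct ht hodd heven hn
end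

section
/- Let D_{2n} be the dihedral group of order 2n (n ≥ 3) and H a proper subgroup of D_{2n} not contained in the cyclic subgroup ⟨a⟩ of rotations. Then H is both a perfect code and a total perfect code of D_{2n}. -/
lemma transversal_map {G : Type*} [Group G] {H : Subgroup G} {L : Set G}
    (hL : Subgroup.IsComplement L (H : Set G)) (f : G → G)
    (hf : ∀ g ∈ L, g⁻¹ * f g ∈ H) : Subgroup.IsComplement (f '' L) (H : Set G) := by
  have hL' : Subgroup.IsComplement L (H : Set G) := hL
  rw [Subgroup.isComplement_iff_existsUnique_inv_mul_mem] at hL'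
  have : Subgroup.IsComplement (f '' L) (H : Set G) := by
    rw [Subgroup.isComplement_iff_existsUnique_inv_mul_mem]
    intro g
    obtain ⟨⟨s, hsL⟩, hs, huniq⟩ := hL' g
    refine ⟨⟨f s, ⟨s, hsL, rfl⟩⟩, ?_, ?_⟩
    · have h1 : (f s)⁻¹ * s ∈ H := by
        have := hf s hsL
        simpa using (inv_mem this)
      simpa [mul_assoc] using mul_mem h1 hs
    · rintro ⟨x, t, htL, rfl⟩ hx
      have ht : (t : G)⁻¹ * g ∈ H := by
        have h1 : t⁻¹ * f t ∈ H := hf t htL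
        simpa [mul_assoc] using mul_mem h1 hx
      have := huniq ⟨t, htL⟩ ht
      simp only [Subtype.mk.injEq] at this
      simp [this]
  exact this

lemma r_inv' {n : ℕ} (i : ZMod n) : (DihedralGroup.r i)⁻¹ = DihedralGroup.r (-i) :=
  inv_eq_of_mul_eq_one_right (by rw [DihedralGroup.r_mul_r, add_neg_cancel, DihedralGroup.one_def])

lemma sr_inv' (n : ℕ) (i : ZMod n) : (DihedralGroup.sr i)⁻¹ = DihedralGroup.sr i :=
  inv_eq_of_mul_eq_one_right (DihedralGroup.sr_mul_self i)

lemma self_inv_set {G : Type*} [Group G] {S : Set G} (h : ∀ x ∈ S, x⁻¹ = x) : S⁻¹ = S := by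
  ext x
  rw [Set.mem_inv]
  constructor
  · intro hx
    have := h _ hx
    rwa [← this, inv_inv] at hx
  · intro hx
    rwa [h x hx]

theorem dihedral_aux (n : ℕ) (hn : 3 ≤ n)
    (H : Subgroup (DihedralGroup n)) (hprop : H ≠ ⊤)
    (hnot : ¬ H ≤ Subgroup.zpowers (DihedralGroup.r (1 : ZMod n))) :
    (∃ L : Set (DihedralGroup n), L⁻¹ = L ∧ (1 : DihedralGroup n) ∈ L ∧
      Subgroup.IsComplement L (H : Set (DihedralGroup n))) ∧
    (∃ S : Set (DihedralGroup n), S⁻¹ = S ∧ (1 : DihedralGroup n) ∉ S ∧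
      Subgroup.IsComplement S (H : Set (DihedralGroup n))) := by
  haveI : NeZero n := ⟨by omega⟩
  -- H contains a reflection
  obtain ⟨m, hm⟩ : ∃ m : ZMod n, DihedralGroup.sr m ∈ H := by
    by_contra h
    push_neg at h
    apply hnot
    intro x hx
    cases x with
    | r i =>
        refine ⟨(i.val : ℤ), ?_⟩
        show DihedralGroup.r 1 ^ (i.val : ℤ) = DihedralGroup.r i
        rw [zpow_natCast, DihedralGroup.r_one_pow]
        simp [ZMod.natCast_val, ZMod.cast_id]
    | sr i => exact absurd hx (h i)
  -- the map sending each element to a reflection in its coset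
  set f : DihedralGroup n → DihedralGroup n := fun g =>
    match g with
    | DihedralGroup.r j => DihedralGroup.sr (m - j)
    | DihedralGroup.sr j => DihedralGroup.sr j with hf_def
  have hfH : ∀ g : DihedralGroup n, g⁻¹ * f g ∈ H := by
    intro g
    cases g with
    | r j =>
        have : (DihedralGroup.r j)⁻¹ * f (DihedralGroup.r j) = DihedralGroup.sr m := by
          show (DihedralGroup.r j)⁻¹ * DihedralGroup.sr (m - j) = DihedralGroup.sr m
          rw [r_inv', DihedralGroup.r_mul_sr]
          ring_nf
        rw [this]; exact hm
    | sr j =>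
        have : (DihedralGroup.sr j)⁻¹ * f (DihedralGroup.sr j) = 1 := by
          show (DihedralGroup.sr j)⁻¹ * DihedralGroup.sr j = 1
          exact inv_mul_cancel _
        rw [this]; exact one_mem H
  have hfsr : ∀ g : DihedralGroup n, ∃ j, f g = DihedralGroup.sr j := by
    intro g; cases g with
    | r j => exact ⟨m - j, rfl⟩
    | sr j => exact ⟨j, rfl⟩
  obtain ⟨L₀, hL₀, h1L₀⟩ := Subgroup.exists_isComplement_left H (1 : DihedralGroup n)
  have hL₀c : Subgroup.IsComplement L₀ (H : Set (DihedralGroup n)) := hL₀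
  constructor
  · -- perfect code
    classical
    set f₁ : DihedralGroup n → DihedralGroup n := fun g => if g = 1 then 1 else f g with hf₁
    refine ⟨f₁ '' L₀, ?_, ?_, ?_⟩
    · apply self_inv_set
      rintro x ⟨t, _, rfl⟩
      by_cases h : t = 1
      · simp [hf₁, h]
      · simp only [hf₁, if_neg h]
        obtain ⟨j, hj⟩ := hfsr t
        rw [hj]; exact sr_inv' n j
    · exact ⟨1, h1L₀, by simp [hf₁]⟩
    · apply transversal_map hL₀c
      intro g _
      by_cases h : g = 1
      · simp [hf₁, h, one_mem]
      · simp only [hf₁, if_neg h]; exact hfH g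
  · -- total perfect code
    refine ⟨f '' L₀, ?_, ?_, ?_⟩
    · apply self_inv_set
      rintro x ⟨t, _, rfl⟩
      obtain ⟨j, hj⟩ := hfsr t
      rw [hj]; exact sr_inv' n j
    · rintro ⟨t, _, ht⟩
      obtain ⟨j, hj⟩ := hfsr t
      rw [hj] at ht
      exact absurd ht.symm (by simp [DihedralGroup.one_def, -DihedralGroup.r_zero])
    · exact transversal_map hL₀c f (fun g _ => hfH g)

/-- Every proper subgroup of the dihedral group of order 2n (n ≥ 3) that is not contained
in the rotation subgroup ⟨a⟩ is both a perfect code and a total perfect code. -/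
theorem dihedral_nonrotation_subgroup_perfect_codes (n : ℕ) (hn : 3 ≤ n)
    (H : Subgroup (DihedralGroup n)) (hprop : H ≠ ⊤)
    (hnot : ¬ H ≤ Subgroup.zpowers (DihedralGroup.r (1 : ZMod n))) :
    IsSubgroupPerfectCode H ∧ IsSubgroupTotalPerfectCode H := by
  obtain ⟨h1, h2⟩ := dihedral_aux n hn H hprop hnot
  exact ⟨h1, h2⟩
end

section
/- Let G be a finite abelian group and σ a power automorphism of G (an automorphism mapping each element to a power of itself). If A and B are subsets of G such that in the group ring ℤ[G] the product of the indicator sums satisfies (Σ_{a∈A} a)(Σ_{b∈B} b) = Σ_{g∈G} g, then also (Σ_{a∈A^σ} a)(Σ_{b∈B} b) = Σ_{g∈G} g. In particular, if (A,B) is a tiling of G then so is (A^σ, B). -/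
set_option linter.unusedSectionVars false


section Univ
variable {G : Type*} [CommGroup G] [Fintype G]

lemma sigma_eq_of_trivial_int (σ : G ≃* G) (hσ : ∀ g : G, ∃ k : ℤ, σ g = g ^ k)
    (g0 : G) (k0 : ℤ) (hg0 : σ g0 = g0 ^ k0) (hord : orderOf g0 = Monoid.exponent G)
    (c : G) (hc : ∀ i : ℤ, c ^ i ∈ Subgroup.zpowers g0 → c ^ i = 1) :
    σ c = c ^ k0 := by
  obtain ⟨kc, hkc⟩ := hσ c
  obtain ⟨kt, hkt⟩ := hσ (g0 * c)
  have h1 : g0 ^ kt * c ^ kt = g0 ^ k0 * c ^ kc := by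
    rw [← mul_zpow, ← hkt, map_mul σ, hg0, hkc]
  have e1 : g0 ^ kt = g0 ^ k0 * g0 ^ (kt - k0) := by rw [← zpow_add, add_sub_cancel]
  have e2 : c ^ kc = c ^ kt * c ^ (kc - kt) := by rw [← zpow_add, add_sub_cancel]
  have key : g0 ^ (kt - k0) = c ^ (kc - kt) := by
    have h2 : g0 ^ (kt - k0) * (g0 ^ k0 * c ^ kt) = c ^ (kc - kt) * (g0 ^ k0 * c ^ kt) := by
      calc g0 ^ (kt - k0) * (g0 ^ k0 * c ^ kt)
          = (g0 ^ k0 * g0 ^ (kt - k0)) * c ^ kt := by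
            simp [mul_comm, mul_left_comm, mul_assoc]
        _ = g0 ^ kt * c ^ kt := by rw [← e1]
        _ = g0 ^ k0 * c ^ kc := h1
        _ = g0 ^ k0 * (c ^ kt * c ^ (kc - kt)) := by rw [← e2]
        _ = c ^ (kc - kt) * (g0 ^ k0 * c ^ kt) := by
            simp [mul_comm, mul_left_comm, mul_assoc]
    exact mul_right_cancel h2
  have hmem : c ^ (kc - kt) ∈ Subgroup.zpowers g0 :=
    Subgroup.mem_zpowers_iff.2 ⟨kt - k0, key⟩
  have h2 : c ^ (kc - kt) = 1 := hc _ hmem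
  have h3 : g0 ^ (kt - k0) = 1 := by rw [key, h2]
  have h4 : ((orderOf g0 : ℤ)) ∣ (kt - k0) := orderOf_dvd_iff_zpow_eq_one.2 h3
  have h5 : ((orderOf c : ℤ)) ∣ (kt - k0) := by
    refine dvd_trans ?_ h4
    exact_mod_cast Int.natCast_dvd_natCast.2 (hord ▸ Monoid.order_dvd_exponent c)
  have h6 : c ^ (kt - k0) = 1 := orderOf_dvd_iff_zpow_eq_one.1 h5
  have hfin : c ^ kc = c ^ k0 := by
    have hk : kc = k0 + ((kc - kt) + (kt - k0)) := by ring
    rw [hk, zpow_add, zpow_add, h2, h6, one_mul, mul_one]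
  rw [hkc, hfin]

lemma power_aut_universal (σ : G ≃* G) (hσ : ∀ g : G, ∃ k : ℤ, σ g = g ^ k) :
    ∃ N : ℕ, 1 ≤ N ∧ Nat.Coprime N (Monoid.exponent G) ∧ ∀ g : G, σ g = g ^ N := by
  classical
  set m := Monoid.exponent G with hm
  have hmpos : 0 < m := Monoid.exponent_pos.2 Monoid.ExponentExists.of_finite
  obtain ⟨g0, hg0ord⟩ :=
    Monoid.exists_orderOf_eq_exponent (Monoid.ExponentExists.of_finite (G := G))
  obtain ⟨k0, hk0⟩ := hσ g0
  have huniv : ∀ h : G, σ h = h ^ k0 := by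
    intro h
    set Z := Subgroup.zpowers g0 with hZ
    set r := orderOf h with hr
    have hrpos : 0 < r := orderOf_pos h
    have hex : ∃ i, 0 < i ∧ h ^ i ∈ Z :=
      ⟨r, hrpos, by rw [pow_orderOf_eq_one]; exact one_mem _⟩
    set j := Nat.find hex with hj
    obtain ⟨hjpos, hjmem⟩ := Nat.find_spec hex
    have hdvd : ∀ i : ℕ, h ^ i ∈ Z → j ∣ i := by
      intro i hi
      rcases Nat.eq_zero_or_pos (i % j) with h0 | h0
      · exact Nat.dvd_of_mod_eq_zero h0
      · exfalso
        have hdecomp : h ^ i = (h ^ j) ^ (i / j) * h ^ (i % j) := by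
          rw [← pow_mul, ← pow_add, Nat.div_add_mod]
        have hmm : h ^ (i % j) = ((h ^ j) ^ (i / j))⁻¹ * h ^ i := by
          rw [hdecomp, inv_mul_cancel_left]
        have hmemmod : h ^ (i % j) ∈ Z := by
          rw [hmm]; exact Z.mul_mem (Z.inv_mem (Z.pow_mem hjmem _)) hi
        exact Nat.find_min hex (Nat.mod_lt i hjpos) ⟨h0, hmemmod⟩
    have hjr : j ∣ r := hdvd r (by rw [pow_orderOf_eq_one]; exact one_mem _)
    have hzr : h ^ (r : ℤ) = 1 := by rw [zpow_natCast, pow_orderOf_eq_one]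
    have hdvdz : ∀ i : ℤ, h ^ i ∈ Z → (j : ℤ) ∣ i := by
      intro i hi
      have hnn : 0 ≤ i % (r : ℤ) := Int.emod_nonneg i (by exact_mod_cast hrpos.ne')
      have hmod : h ^ (i % (r : ℤ)) = h ^ i * (h ^ ((r : ℤ) * (i / (r : ℤ))))⁻¹ := by
        rw [Int.emod_def, zpow_sub]
      have hone : h ^ ((r : ℤ) * (i / (r : ℤ))) = 1 := by
        rw [zpow_mul, hzr, one_zpow]
      have hmem2 : h ^ ((i % (r : ℤ)).toNat) ∈ Z := by
        have : h ^ ((i % (r : ℤ)).toNat) = h ^ (i % (r : ℤ)) := by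
          rw [← zpow_natCast, Int.toNat_of_nonneg hnn]
        rw [this, hmod, hone, inv_one, mul_one]; exact hi
      have h2 : j ∣ (i % (r : ℤ)).toNat := hdvd _ hmem2
      have h3 : (j : ℤ) ∣ i % (r : ℤ) := by
        rw [← Int.toNat_of_nonneg hnn]; exact_mod_cast h2
      have h4 : (j : ℤ) ∣ (r : ℤ) := Int.natCast_dvd_natCast.2 hjr
      calc (j : ℤ) ∣ (r : ℤ) * (i / (r : ℤ)) + i % (r : ℤ) :=
            dvd_add (h4.mul_right _) h3
        _ = i := Int.mul_ediv_add_emod i (r : ℤ)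
    obtain ⟨s, hs⟩ := Subgroup.mem_zpowers_iff.1 hjmem
    -- hs : g0 ^ s = h ^ j
    have hrm : r ∣ m := hm ▸ Monoid.order_dvd_exponent h
    set e := r / j with he'
    have he : r = j * e := (Nat.mul_div_cancel' hjr).symm
    have hepos : 0 < e := by
      rcases Nat.eq_zero_or_pos e with h0 | h0
      · rw [h0, Nat.mul_zero] at he; omega
      · exact h0
    set w := m / r with hw'
    have hw : m = r * w := (Nat.mul_div_cancel' hrm).symm
    have hse : g0 ^ (s * (e : ℤ)) = 1 := by
      rw [zpow_mul, hs, ← zpow_natCast, ← zpow_mul, ← Nat.cast_mul, ← he, hzr]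
    have hdm : ((m : ℤ)) ∣ s * (e : ℤ) := by
      have := orderOf_dvd_iff_zpow_eq_one.2 hse
      rwa [hg0ord, ← hm] at this
    obtain ⟨t, ht⟩ := hdm
    have hcancel : s * (e : ℤ) = ((j : ℤ) * ((w : ℤ) * t)) * (e : ℤ) := by
      rw [ht]
      have : (m : ℤ) = (j : ℤ) * (e : ℤ) * (w : ℤ) := by
        rw [hw, he]; push_cast; ring
      rw [this]; ring
    have hse' : s = (j : ℤ) * ((w : ℤ) * t) :=
      mul_right_cancel₀ (by exact_mod_cast hepos.ne' : ((e : ℤ)) ≠ 0) hcancel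
    set a : ℤ := (w : ℤ) * t with ha
    set c := h * g0 ^ (-a) with hcdef
    have hcj : c ^ (j : ℤ) = 1 := by
      have h1 : c ^ (j : ℤ) = h ^ (j : ℤ) * (g0 ^ s)⁻¹ := by
        rw [hcdef, mul_zpow, ← zpow_mul,
          show -a * (j : ℤ) = -s by rw [hse']; ring, zpow_neg]
      rw [h1, hs, zpow_natCast, mul_inv_cancel]
    have hctriv : ∀ i : ℤ, c ^ i ∈ Z → c ^ i = 1 := by
      intro i hi
      have hci : c ^ i = h ^ i * g0 ^ (-a * i) := by
        rw [hcdef, mul_zpow, ← zpow_mul]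
      have hhi : h ^ i ∈ Z := by
        have : h ^ i = c ^ i * g0 ^ (a * i) := by
          rw [hci, mul_assoc, ← zpow_add]
          have : -a * i + a * i = 0 := by ring
          rw [this, zpow_zero, mul_one]
        rw [this]
        exact Z.mul_mem hi (Subgroup.zpow_mem Z (Subgroup.mem_zpowers g0) _)
      obtain ⟨q, hq⟩ := hdvdz i hhi
      rw [hq, zpow_mul, hcj, one_zpow]
    have hσc : σ c = c ^ k0 :=
      sigma_eq_of_trivial_int σ hσ g0 k0 hk0 hg0ord c hctriv
    have hhc : h = c * g0 ^ a := by
      rw [hcdef, mul_assoc, ← zpow_add, neg_add_cancel, zpow_zero, mul_one]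
    calc σ h = σ c * σ (g0 ^ a) := by rw [hhc, map_mul]
      _ = c ^ k0 * (g0 ^ a) ^ k0 := by
          rw [hσc, map_zpow, hk0, ← zpow_mul, mul_comm k0 a, zpow_mul]
      _ = (c * g0 ^ a) ^ k0 := (mul_zpow _ _ _).symm
      _ = h ^ k0 := by rw [← hhc]
  -- now turn k0 into a natural number exponent
  set n0 : ℕ := (k0 % (m : ℤ)).toNat with hn0def
  have hmz : ((m : ℤ)) ≠ 0 := by exact_mod_cast hmpos.ne'
  have hn0nn : 0 ≤ k0 % (m : ℤ) := Int.emod_nonneg k0 hmz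
  have hpow : ∀ g : G, g ^ k0 = g ^ n0 := by
    intro g
    have h1 : g ^ k0 = g ^ ((m : ℤ) * (k0 / (m : ℤ))) * g ^ (k0 % (m : ℤ)) := by
      rw [← zpow_add, Int.mul_ediv_add_emod]
    have h2 : g ^ ((m : ℤ) * (k0 / (m : ℤ))) = 1 := by
      rw [zpow_mul, zpow_natCast, hm, Monoid.pow_exponent_eq_one, one_zpow]
    rw [h1, h2, one_mul, ← Int.toNat_of_nonneg hn0nn, zpow_natCast]
  have hσn : ∀ g : G, σ g = g ^ n0 := fun g => by rw [huniv g, hpow g]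
  have hcop : Nat.Coprime n0 m := by
    have h1 : orderOf (σ g0) = m := by
      have := orderOf_injective σ.toMonoidHom σ.injective g0
      simp only [MulEquiv.coe_toMonoidHom] at this
      rw [this, hg0ord, hm]
    have h2 : orderOf (g0 ^ n0) = m := by rw [← hσn g0, h1]
    rw [orderOf_pow, hg0ord, ← hm] at h2
    have := (Nat.div_eq_self).1 h2
    rcases this with h3 | h3
    · omega
    · exact Nat.coprime_comm.1 h3
  by_cases h0 : n0 = 0
  · -- then m = 1 and the group is trivial
    have hm1 : m = 1 := by
      have := hcop
      rw [h0] at this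
      simpa [Nat.coprime_zero_left] using this
    have htriv : ∀ g : G, g = 1 := by
      intro g
      have := Monoid.pow_exponent_eq_one g
      rwa [← hm, hm1, pow_one] at this
    exact ⟨1, le_refl _, by simp [hm1], fun g => by rw [htriv g, htriv (σ 1)]; simp⟩
  · exact ⟨n0, Nat.pos_of_ne_zero h0, hcop, hσn⟩

end Univ


section Ring
variable {G : Type*} [CommGroup G] [Fintype G] [DecidableEq G]

/-- The augmentation map evaluated as the sum of coefficients. -/
lemma aug_eq_sum_coeff (v : MonoidAlgebra ℤ G) :
    (MonoidAlgebra.lift ℤ ℤ G 1) v = ∑ g : G, v.coeff g := by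
  induction v using MonoidAlgebra.induction_linear with
  | zero => simp
  | add f g hf hg =>
      rw [map_add, hf, hg, ← Finset.sum_add_distrib]
      simp [MonoidAlgebra.coeff_add]
  | single a b =>
      rw [MonoidAlgebra.lift_single]
      simp [MonoidAlgebra.coeff_single_apply]

lemma coeff_nonneg_of_prod (A B : Finset G) (g : G) :
    0 ≤ ((∑ a ∈ A, MonoidAlgebra.of ℤ G a) * (∑ b ∈ B, MonoidAlgebra.of ℤ G b)).coeff g := by
  rw [Finset.sum_mul_sum]
  have : ∀ a b : G, (MonoidAlgebra.of ℤ G a) * (MonoidAlgebra.of ℤ G b)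
      = MonoidAlgebra.of ℤ G (a * b) := fun a b => (map_mul (MonoidAlgebra.of ℤ G) a b).symm
  simp only [this]
  rw [MonoidAlgebra.coeff_sum, Finsupp.finset_sum_apply]
  refine Finset.sum_nonneg fun a _ => ?_
  rw [MonoidAlgebra.coeff_sum, Finsupp.finset_sum_apply]
  refine Finset.sum_nonneg fun b _ => ?_
  rw [MonoidAlgebra.of_apply, MonoidAlgebra.coeff_single_apply]
  split <;> norm_num

lemma coeff_sumG (g : G) : (∑ g' : G, MonoidAlgebra.of ℤ G g').coeff g = 1 := by
  rw [MonoidAlgebra.coeff_sum, Finsupp.finset_sum_apply]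
  simp only [MonoidAlgebra.of_apply, MonoidAlgebra.coeff_single_apply]
  rw [Finset.sum_ite_eq' Finset.univ g (fun _ => (1:ℤ))]
  simp

section Prime
variable (p : ℕ) [Fact p.Prime]

/-- Coefficientwise description of the reduction mod `p` map on group rings. -/
lemma phi_coeff (φ : MonoidAlgebra ℤ G →ₐ[ℤ] MonoidAlgebra (ZMod p) G)
    (hφ : φ = (MonoidAlgebra.lift ℤ (MonoidAlgebra (ZMod p) G) G) (MonoidAlgebra.of (ZMod p) G))
    (f : MonoidAlgebra ℤ G) (g : G) : (φ f).coeff g = ((f.coeff g : ℤ) : ZMod p) := by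
  induction f using MonoidAlgebra.induction_linear with
  | zero => simp
  | add u v hu hv =>
      rw [map_add, MonoidAlgebra.coeff_add, MonoidAlgebra.coeff_add, Finsupp.add_apply,
        Finsupp.add_apply, hu, hv]; push_cast; ring
  | single a b =>
      rw [hφ, MonoidAlgebra.lift_single, MonoidAlgebra.of_apply, MonoidAlgebra.smul_single,
        MonoidAlgebra.coeff_single_apply, MonoidAlgebra.coeff_single_apply]
      split <;> simp

/-- Key step: tiling is preserved by raising the first factor to a prime power
coprime to the exponent. -/
lemma tiling_pow_prime (hpm : ¬ p ∣ Monoid.exponent G) (A B : Finset G)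
    (h : (∑ a ∈ A, MonoidAlgebra.of ℤ G a) * (∑ b ∈ B, MonoidAlgebra.of ℤ G b) =
        ∑ g : G, MonoidAlgebra.of ℤ G g) :
    (∑ a ∈ A.image (fun x => x ^ p), MonoidAlgebra.of ℤ G a) *
        (∑ b ∈ B, MonoidAlgebra.of ℤ G b) = ∑ g : G, MonoidAlgebra.of ℤ G g := by
  classical
  have hp : p.Prime := Fact.out
  have hcopm : Nat.Coprime p (Monoid.exponent G) := (hp.coprime_iff_not_dvd).2 hpm
  -- injectivity of x ↦ x ^ p
  have hinj : Function.Injective (fun x : G => x ^ p) := by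
    intro x y hxy
    simp only at hxy
    have h1 : (x * y⁻¹) ^ p = 1 := by
      rw [mul_pow, hxy, inv_pow, mul_inv_cancel]
    have h2 : orderOf (x * y⁻¹) ∣ p := orderOf_dvd_of_pow_eq_one h1
    have h3 : orderOf (x * y⁻¹) ∣ Monoid.exponent G := Monoid.order_dvd_exponent _
    have h4 : orderOf (x * y⁻¹) ∣ 1 := Nat.dvd_one.2 (Nat.eq_one_of_dvd_coprimes hcopm h2 h3)
    have h5 : x * y⁻¹ = 1 := orderOf_eq_one_iff.1 (Nat.dvd_one.1 h4)
    rwa [mul_inv_eq_one] at h5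
  -- augmentation: |A| * |B| = |G|
  set ε := (MonoidAlgebra.lift ℤ ℤ G) 1 with hε
  have hεof : ∀ g : G, ε (MonoidAlgebra.of ℤ G g) = 1 := by
    intro g; rw [hε, MonoidAlgebra.lift_of]; rfl
  have hεsum : ∀ C : Finset G, ε (∑ a ∈ C, MonoidAlgebra.of ℤ G a) = C.card := by
    intro C
    rw [map_sum, Finset.sum_congr rfl (fun a _ => hεof a), Finset.sum_const, nsmul_eq_mul,
      mul_one]
  have hcard : (A.card : ℤ) * B.card = Fintype.card G := by
    have := congrArg ε h
    rw [map_mul, hεsum, hεsum] at this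
    rw [this, map_sum, Finset.sum_congr rfl (fun g _ => hεof g), Finset.sum_const, nsmul_eq_mul,
      mul_one]
    simp
  have hcardn : A.card * B.card = Fintype.card G := by exact_mod_cast hcard
  -- p does not divide |G|, hence not |A|
  have hpG : ¬ p ∣ Fintype.card G := by
    intro hdvd
    obtain ⟨x, hx⟩ := exists_prime_orderOf_dvd_card p hdvd
    exact hpm (hx ▸ Monoid.order_dvd_exponent x)
  have hpA : ¬ p ∣ A.card := fun hdvd => hpG (hcardn ▸ hdvd.mul_right B.card)
  have hAz : ((A.card : ZMod p)) ≠ 0 := by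
    rw [Ne, ZMod.natCast_eq_zero_iff]
    exact hpA
  -- the mod-p group ring
  set Rp := MonoidAlgebra (ZMod p) G with hRp
  haveI : CharP Rp p := by
    refine charP_of_injective_ringHom
      (f := (MonoidAlgebra.singleOneRingHom : ZMod p →+* Rp)) ?_ p
    intro x y hxy
    have := congrArg (fun v : Rp => v.coeff 1) hxy
    simpa [MonoidAlgebra.singleOneRingHom] using this
  haveI : ExpChar Rp p := ExpChar.prime hp
  set φ := (MonoidAlgebra.lift ℤ Rp G) (MonoidAlgebra.of (ZMod p) G) with hφ
  have hφof : ∀ g : G, φ (MonoidAlgebra.of ℤ G g) = MonoidAlgebra.of (ZMod p) G g := by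
    intro g; rw [hφ, MonoidAlgebra.lift_of]
  set Up : Rp := ∑ g : G, MonoidAlgebra.of (ZMod p) G g with hUp
  have hφU : φ (∑ g : G, MonoidAlgebra.of ℤ G g) = Up := by
    rw [map_sum, Finset.sum_congr rfl (fun g _ => hφof g), hUp]
  -- Frobenius: φ(S_{A^p}) = φ(S_A)^p
  have hfrob : φ (∑ a ∈ A.image (fun x => x ^ p), MonoidAlgebra.of ℤ G a)
      = (φ (∑ a ∈ A, MonoidAlgebra.of ℤ G a)) ^ p := by
    rw [map_sum, map_sum]
    rw [Finset.sum_image (fun x _ y _ hxy => hinj hxy)]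
    rw [sum_pow_char]
    refine Finset.sum_congr rfl fun a _ => ?_
    rw [hφof, hφof, ← map_pow]
  -- absorption: anything times Up
  have habs1 : ∀ a : G, MonoidAlgebra.of (ZMod p) G a * Up = Up := by
    intro a
    rw [hUp, Finset.mul_sum]
    rw [← Equiv.sum_comp (Equiv.mulLeft a) (fun g => MonoidAlgebra.of (ZMod p) G g)]
    refine Finset.sum_congr rfl fun g _ => ?_
    rw [← map_mul]
    rfl
  have habsA : φ (∑ a ∈ A, MonoidAlgebra.of ℤ G a) * Up = (A.card : Rp) * Up := by
    rw [map_sum, Finset.sum_mul]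
    have : ∀ a ∈ A, φ (MonoidAlgebra.of ℤ G a) * Up = Up := fun a _ => by
      rw [hφof]; exact habs1 a
    rw [Finset.sum_congr rfl this, Finset.sum_const, nsmul_eq_mul]
  have habspow : ∀ k : ℕ, (φ (∑ a ∈ A, MonoidAlgebra.of ℤ G a)) ^ k * Up
      = (A.card : Rp) ^ k * Up := by
    intro k
    induction k with
    | zero => simp
    | succ k ih =>
        calc (φ (∑ a ∈ A, MonoidAlgebra.of ℤ G a)) ^ (k + 1) * Up
            = (φ (∑ a ∈ A, MonoidAlgebra.of ℤ G a)) ^ k *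
              ((φ (∑ a ∈ A, MonoidAlgebra.of ℤ G a)) * Up) := by ring
          _ = (φ (∑ a ∈ A, MonoidAlgebra.of ℤ G a)) ^ k * ((A.card : Rp) * Up) := by rw [habsA]
          _ = (A.card : Rp) * ((φ (∑ a ∈ A, MonoidAlgebra.of ℤ G a)) ^ k * Up) := by ring
          _ = (A.card : Rp) * ((A.card : Rp) ^ k * Up) := by rw [ih]
          _ = (A.card : Rp) ^ (k + 1) * Up := by ring
  -- Fermat
  have hfermat : ((A.card : Rp)) ^ (p - 1) = 1 := by
    have h1 : ((A.card : Rp)) = algebraMap (ZMod p) Rp ((A.card : ZMod p)) := by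
      rw [map_natCast]
    rw [h1, ← map_pow, ZMod.pow_card_sub_one_eq_one hAz, map_one]
  -- the main mod-p computation
  have hmain : φ ((∑ a ∈ A.image (fun x => x ^ p), MonoidAlgebra.of ℤ G a) *
      (∑ b ∈ B, MonoidAlgebra.of ℤ G b)) = Up := by
    rw [map_mul, hfrob]
    have hsplit : (φ (∑ a ∈ A, MonoidAlgebra.of ℤ G a)) ^ p
        = (φ (∑ a ∈ A, MonoidAlgebra.of ℤ G a)) ^ (p - 1) *
          (φ (∑ a ∈ A, MonoidAlgebra.of ℤ G a)) := by
      rw [← pow_succ, Nat.sub_add_cancel hp.one_lt.le]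
    rw [hsplit, mul_assoc, ← map_mul, h, hφU, habspow, hfermat, one_mul]
  -- now extract coefficients over ℤ
  set D := (∑ a ∈ A.image (fun x => x ^ p), MonoidAlgebra.of ℤ G a) *
      (∑ b ∈ B, MonoidAlgebra.of ℤ G b) with hD
  have hmod : ∀ g : G, ((D.coeff g : ℤ) : ZMod p) = 1 := by
    intro g
    have h1 : (φ D).coeff g = Up.coeff g := congrArg (fun v : Rp => v.coeff g) hmain
    rw [phi_coeff p φ hφ D g] at h1
    rw [h1, hUp]
    rw [MonoidAlgebra.coeff_sum, Finsupp.finset_sum_apply]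
    simp only [MonoidAlgebra.of_apply, MonoidAlgebra.coeff_single_apply]
    rw [Finset.sum_ite_eq' Finset.univ g (fun _ => (1 : ZMod p))]
    simp
  have hnonneg : ∀ g : G, 0 ≤ D.coeff g := fun g => coeff_nonneg_of_prod _ _ g
  have hone : ∀ g : G, 1 ≤ D.coeff g := by
    intro g
    rcases lt_or_eq_of_le (hnonneg g) with h1 | h1
    · omega
    · exfalso
      have := hmod g
      rw [← h1] at this
      simp at this
  have hsum : ∑ g : G, D.coeff g = Fintype.card G := by
    have h1 : ε D = ∑ g : G, D.coeff g := aug_eq_sum_coeff D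
    have h2 : ε D = (A.image (fun x => x ^ p)).card * B.card := by
      rw [hD, map_mul, hεsum, hεsum]
    rw [← h1, h2, Finset.card_image_of_injective A hinj]
    exact hcard
  have hDone : ∀ g : G, D.coeff g = 1 := by
    have h1 : ∑ g : G, (1 : ℤ) = ∑ g : G, D.coeff g := by
      rw [hsum]; simp
    have := (Finset.sum_eq_sum_iff_of_le (fun g _ => hone g)).1 h1
    exact fun g => (this g (Finset.mem_univ g)).symm
  -- conclude
  ext g
  rw [hDone g, coeff_sumG]
end Prime


lemma tiling_pow (N : ℕ) (hN1 : 1 ≤ N) (hcop : Nat.Coprime N (Monoid.exponent G))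
    (A B : Finset G)
    (h : (∑ a ∈ A, MonoidAlgebra.of ℤ G a) * (∑ b ∈ B, MonoidAlgebra.of ℤ G b) =
        ∑ g : G, MonoidAlgebra.of ℤ G g) :
    (∑ a ∈ A.image (fun x => x ^ N), MonoidAlgebra.of ℤ G a) *
        (∑ b ∈ B, MonoidAlgebra.of ℤ G b) = ∑ g : G, MonoidAlgebra.of ℤ G g := by
  classical
  induction N using Nat.strong_induction_on generalizing A with
  | _ N ih =>
    rcases eq_or_lt_of_le hN1 with h1 | h1
    · -- N = 1
      have himg : A.image (fun x : G => x ^ N) = A := by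
        ext x
        simp [← h1, pow_one]
      rw [himg]
      exact h
    · -- N > 1
      set q := N.minFac with hq
      have hqprime : q.Prime := Nat.minFac_prime (by omega)
      haveI : Fact q.Prime := ⟨hqprime⟩
      have hqd : q ∣ N := N.minFac_dvd
      set M := N / q with hM
      have hNM : N = q * M := (Nat.mul_div_cancel' hqd).symm
      have hMpos : 1 ≤ M := by
        rcases Nat.eq_zero_or_pos M with h0 | h0
        · rw [h0, Nat.mul_zero] at hNM; omega
        · exact h0
      have hMlt : M < N := by
        have := hqprime.one_lt
        calc M = N / q := hM
          _ < N := Nat.div_lt_self (by omega) this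
      have hqcop : Nat.Coprime q (Monoid.exponent G) := hcop.coprime_dvd_left hqd
      have hMcop : Nat.Coprime M (Monoid.exponent G) :=
        hcop.coprime_dvd_left (hNM ▸ Dvd.intro_left q rfl)
      have hqnd : ¬ q ∣ Monoid.exponent G := hqprime.coprime_iff_not_dvd.1 hqcop
      have step1 := tiling_pow_prime q hqnd A B h
      have step2 := ih M hMlt hMpos hMcop (A.image (fun x => x ^ q)) step1
      rw [Finset.image_image] at step2
      have : ((fun x : G => x ^ M) ∘ (fun x : G => x ^ q)) = (fun x : G => x ^ N) := by
        funext x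
        simp [Function.comp, ← pow_mul, ← hNM]
      rwa [this] at step2

end Ring

/-- Let G be a finite abelian group and σ a power automorphism of G. If A and B are
subsets of G with Ā · B̄ = Ḡ in the group ring ℤ[G], then also (A^σ)‾ · B̄ = Ḡ.
In particular, if (A, B) is a tiling of G then so is (A^σ, B). -/
theorem power_automorphism_preserves_tiling {G : Type*} [CommGroup G] [Fintype G]
    [DecidableEq G] (σ : G ≃* G) (hσ : ∀ g : G, ∃ k : ℤ, σ g = g ^ k)
    (A B : Finset G)
    (h : (∑ a ∈ A, MonoidAlgebra.of ℤ G a) * (∑ b ∈ B, MonoidAlgebra.of ℤ G b) =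
        ∑ g : G, MonoidAlgebra.of ℤ G g) :
    (∑ a ∈ A.image σ, MonoidAlgebra.of ℤ G a) * (∑ b ∈ B, MonoidAlgebra.of ℤ G b) =
        ∑ g : G, MonoidAlgebra.of ℤ G g := by
  obtain ⟨N, hN1, hcop, hσN⟩ := power_aut_universal σ hσ
  have himg : A.image σ = A.image (fun x => x ^ N) :=
    Finset.image_congr (fun a _ => hσN a)
  rw [himg]
  exact tiling_pow N hN1 hcop A B h
end

section
/- Let G be a finite group and σ an inner automorphism of G (conjugation by some g ∈ G). If σ is perfect-code-preserving, i.e., for every inverse-closed S ⊆ G \ {e} and every perfect code C in Cay(G,S), the image C^σ is also a perfect code in Cay(G,S), then σ is a power automorphism of G, i.e., σ fixes every subgroup of G setwise (equivalently g normalizes every subgroup of G). -/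
/-- If the inner automorphism x ↦ g⁻¹ x g of a finite group G is perfect-code-preserving
(it maps every perfect code in any Cayley graph of G to a perfect code in the same
graph), then it is a power automorphism, i.e. g normalizes every subgroup of G. -/
theorem perfect_code_preserving_inner_is_power {G : Type*} [Group G] [Fintype G] (g : G)
    (hpcp : ∀ S : Set G, (1 : G) ∉ S → S⁻¹ = S →
      ∀ C : Set G, (∀ x : G, ∃! c : G, c ∈ C ∧ (c = x ∨ x * c⁻¹ ∈ S)) →
        (∀ x : G, ∃! c : G, c ∈ (fun y => g⁻¹ * y * g) '' C ∧ (c = x ∨ x * c⁻¹ ∈ S))) :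
    ∀ H : Subgroup G, ∀ x ∈ H, g⁻¹ * x * g ∈ H := by
  intro H x hx
  classical
  set S : Set G := (H : Set G) \ {1} with hS
  have hS1 : (1 : G) ∉ S := fun h => h.2 rfl
  have hSinv : S⁻¹ = S := by
    ext s
    simp only [hS, Set.mem_inv, Set.mem_diff, Set.mem_singleton_iff, SetLike.mem_coe]
    constructor
    · rintro ⟨h1, h2⟩
      exact ⟨by simpa using H.inv_mem h1, fun hs => h2 (by simp [hs])⟩
    · rintro ⟨h1, h2⟩
      exact ⟨H.inv_mem h1, fun hs => h2 (by simpa using congrArg (·⁻¹) hs)⟩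
  -- key equivalence
  have key : ∀ c z : G, (c = z ∨ z * c⁻¹ ∈ S) ↔ z * c⁻¹ ∈ H := by
    intro c z
    constructor
    · rintro (rfl | hs)
      · simpa using H.one_mem
      · exact hs.1
    · intro hm
      by_cases hcz : c = z
      · exact Or.inl hcz
      · exact Or.inr ⟨hm, fun h1 => hcz (by
          have : z = c := by
            have := mul_eq_one_iff_eq_inv.mp h1
            simpa [mul_inv_eq_one] using h1
          exact this.symm)⟩
  -- restate perfect code condition
  have keyC : ∀ C : Set G, (∀ z : G, ∃! c : G, c ∈ C ∧ z * c⁻¹ ∈ H) ↔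
      (∀ z : G, ∃! c : G, c ∈ C ∧ (c = z ∨ z * c⁻¹ ∈ S)) := by
    intro C
    constructor
    · intro h z
      obtain ⟨c, ⟨hc1, hc2⟩, hc3⟩ := h z
      exact ⟨c, ⟨hc1, (key c z).mpr hc2⟩, fun d ⟨hd1, hd2⟩ => hc3 d ⟨hd1, (key d z).mp hd2⟩⟩
    · intro h z
      obtain ⟨c, ⟨hc1, hc2⟩, hc3⟩ := h z
      exact ⟨c, ⟨hc1, (key c z).mp hc2⟩, fun d ⟨hd1, hd2⟩ => hc3 d ⟨hd1, (key d z).mpr hd2⟩⟩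
  set φ : G → G := fun y => g⁻¹ * y * g with hφ
  have φinj : Function.Injective φ := by
    intro a b hab
    simpa [hφ, mul_assoc] using hab
  -- base transversal containing x
  obtain ⟨C0, hC0t, hxC0⟩ := H.exists_isComplement_right x
  have hC0 : ∀ z : G, ∃! c : G, c ∈ C0 ∧ z * c⁻¹ ∈ H := by
    intro z
    obtain ⟨⟨c, hcC⟩, hc2, hc3⟩ :=
      (Subgroup.isComplement_iff_existsUnique_mul_inv_mem.mp hC0t) z
    refine ⟨c, ⟨hcC, hc2⟩, fun d ⟨hd1, hd2⟩ => ?_⟩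
    exact congrArg Subtype.val (hc3 ⟨d, hd1⟩ hd2)
  -- image is a perfect code
  have himg0 := hpcp S hS1 hSinv C0 ((keyC C0).mp hC0)
  have himg0' : ∀ z : G, ∃! c : G, c ∈ φ '' C0 ∧ z * c⁻¹ ∈ H := (keyC _).mpr himg0
  -- the unique c in C0 with φ c ∈ H
  obtain ⟨d, ⟨hdmem, hd2⟩, hd3⟩ := himg0' 1
  obtain ⟨c, hcC0, rfl⟩ := hdmem
  have hφc : φ c ∈ H := by
    have : (1 : G) * (φ c)⁻¹ ∈ H := hd2
    simpa using H.inv_mem this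
  by_contra hgx
  have hgx' : φ x ∉ H := hgx
  have hcx : c ≠ x := fun h => hgx' (h ▸ hφc)
  -- modified transversal C1
  set C1 : Set G := insert (x * c) (C0 \ {c}) with hC1
  have hxc_equiv : ∀ z : G, z * (x * c)⁻¹ ∈ H ↔ z * c⁻¹ ∈ H := by
    intro z
    constructor
    · intro h
      have := H.mul_mem h hx
      simpa [mul_assoc] using this
    · intro h
      have := H.mul_mem h (H.inv_mem hx)
      simpa [mul_assoc, mul_inv_rev] using this
  have hC1pc : ∀ z : G, ∃! c' : G, c' ∈ C1 ∧ z * c'⁻¹ ∈ H := by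
    intro z
    obtain ⟨c0, ⟨hc01, hc02⟩, hc03⟩ := hC0 z
    by_cases hc0c : c0 = c
    · refine ⟨x * c, ⟨Set.mem_insert _ _, (hxc_equiv z).mpr (hc0c ▸ hc02)⟩, ?_⟩
      rintro d ⟨hd1, hd2⟩
      rcases hd1 with rfl | ⟨hd1, hdne⟩
      · rfl
      · exact absurd (hc03 d ⟨hd1, hd2⟩ ▸ hc0c ▸ rfl : d = c) hdne
    · refine ⟨c0, ⟨Set.mem_insert_of_mem _ ⟨hc01, hc0c⟩, hc02⟩, ?_⟩
      rintro d ⟨hd1, hd2⟩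
      rcases hd1 with rfl | ⟨hd1, hdne⟩
      · exact absurd (hc03 c ⟨hcC0, (hxc_equiv z).mp hd2⟩).symm hc0c
      · exact hc03 d ⟨hd1, hd2⟩
  have himg1 := hpcp S hS1 hSinv C1 ((keyC C1).mp hC1pc)
  have himg1' : ∀ z : G, ∃! c' : G, c' ∈ φ '' C1 ∧ z * c'⁻¹ ∈ H := (keyC _).mpr himg1
  obtain ⟨d1, ⟨hd1mem, hd1H⟩, hd1u⟩ := himg1' 1
  obtain ⟨c1, hc1C1, rfl⟩ := hd1mem
  have hφc1 : φ c1 ∈ H := by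
    have : (1 : G) * (φ c1)⁻¹ ∈ H := hd1H
    simpa using H.inv_mem this
  rcases hc1C1 with rfl | ⟨hc1C0, hc1ne⟩
  · -- c1 = x * c, so φ x ∈ H
    have : φ (x * c) = φ x * φ c := by simp [hφ, mul_assoc]
    have hφx : φ x ∈ H := by
      have h2 := H.mul_mem hφc1 (H.inv_mem hφc)
      rw [this] at h2
      simpa [mul_assoc] using h2
    exact hgx' hφx
  · -- c1 ∈ C0 \ {c}: contradicts uniqueness in himg0'
    have h1 : φ c1 = φ c := by
      have e1 := hd3 (φ c1) ⟨⟨c1, hc1C0, rfl⟩, by simpa using H.inv_mem hφc1⟩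
      exact e1
    exact hc1ne (φinj h1)
end
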